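/- arXiv:math/0611920 — 7 statements merged into one kernel-verified Lean document; each statement's English description precedes it below -/
import Mathlib

section
/- For an open convex cone T in a finite-dimensional real vector space V, and for all y in V and x in T, the gauge M_T(y/x) := inf{λ > 0 : λx − y ∈ closure(T)} satisfies M_T(y/x) = sup over z in the dual cone T* of ⟨z,y⟩/⟨z,x⟩. -/
open Set Filter Topology

variable {V : Type*} [NormedAddCommGroup V] [NormedSpace ℝ V] [FiniteDimensional ℝ V]

/-- An open cone: non-empty, open, convex, invariant under positive scaling, not containing 0. -/
def IsOpenCone (T : Set V) : Prop :=
  T.Nonempty ∧ IsOpen T ∧ Convex ℝ T ∧ (∀ c : ℝ, 0 < c → ∀ u ∈ T, c • u ∈ T) ∧ (0 : V) ∉ T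

/-- The gauge `M_T(y/x) = inf {λ > 0 : λ • x - y ∈ closure T}`. -/
noncomputable def funkM (T : Set V) (y x : V) : ℝ :=
  sInf {l : ℝ | 0 < l ∧ l • x - y ∈ closure T}

/-- The Funk metric `F_T(x,y) = log inf {λ > 0 : λ • y - x ∈ closure T}`. -/
noncomputable def funkF (T : Set V) (x y : V) : ℝ := Real.log (funkM T x y)

/-- The reverse Funk metric `r_T(x,y) = F_T(y,x)`. -/
noncomputable def revF (T : Set V) (x y : V) : ℝ := Real.log (funkM T y x)

/-- The Hilbert metric as the symmetrisation of the Funk metric. -/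
noncomputable def hilD (T : Set V) (x y : V) : ℝ := funkF T x y + revF T x y

/-- The dual cone, as a set of continuous linear functionals. -/
def dualCone (T : Set V) : Set (V →L[ℝ] ℝ) := {z | ∀ u ∈ T, 0 ≤ z u}

/-- The open tangent cone `τ(T,x) = {λ (w - x) : λ > 0, w ∈ T}`. -/
def openTangent (T : Set V) (x : V) : Set V :=
  {v | ∃ l : ℝ, 0 < l ∧ ∃ w ∈ T, v = l • (w - x)}

/-!
The bipolar theorem (Hahn–Banach separation for the closed convex cone `closure T`) says that
`v ∈ closure T` exactly when `⟨z, v⟩ ≥ 0` for every `z ∈ T*`. Since `x` is an interior point of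
`T`, every nonzero `z ∈ T*` has `⟨z, x⟩ > 0`, so `λ x - y ∈ closure T` amounts to
`⟨z, y⟩ / ⟨z, x⟩ ≤ λ` for all `z ∈ T*`. Hence the admissible `λ` in the gauge are the positive
upper bounds of the ratios, and their infimum is the supremum of the ratios.
-/

/-- The junk values `sSup = sInf ∅ = 0` make this hold also when `R` is unbounded. -/
theorem Real.sInf_Ioi_inter_upperBounds {R : Set ℝ} (h0 : (0 : ℝ) ∈ R) :
    sInf (Ioi 0 ∩ upperBounds R) = sSup R := by
  by_cases hR : BddAbove R
  · have hlub := isLUB_csSup ⟨0, h0⟩ hR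
    have hnonneg : 0 ≤ sSup R := hlub.1 h0
    rw [hlub.upperBounds_eq]
    refine IsGLB.csInf_eq ⟨fun l hl => hl.2, fun b hb => ?_⟩ ⟨sSup R + 1, ?_, ?_⟩
    · refine le_of_forall_pos_le_add fun ε hε => hb ⟨?_, ?_⟩
      · exact add_pos_of_nonneg_of_pos hnonneg hε
      · exact le_add_of_nonneg_right hε.le
    · exact add_pos_of_nonneg_of_pos hnonneg one_pos
    · exact le_add_of_nonneg_right (zero_le_one' ℝ)
  · rw [Real.sSup_of_not_bddAbove hR, not_nonempty_iff_eq_empty.1 hR, inter_empty,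
      Real.sInf_empty]

theorem zero_mem_closure_of_smul_mem {E : Type*} [AddCommGroup E] [Module ℝ E]
    [TopologicalSpace E] [ContinuousSMul ℝ E] {T : Set E} (hne : T.Nonempty)
    (hsmul : ∀ c : ℝ, 0 < c → ∀ u ∈ T, c • u ∈ T) : (0 : E) ∈ closure T := by
  obtain ⟨w, hw⟩ := hne
  have hlim : Tendsto (fun t : ℝ => t • w) (𝓝[>] 0) (𝓝 0) := by
    have := (continuous_id.smul continuous_const).tendsto' (0 : ℝ) (0 : E) (zero_smul ℝ w)
    exact this.mono_left nhdsWithin_le_nhds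
  exact mem_closure_of_tendsto hlim
    (eventually_nhdsWithin_of_forall fun t ht => hsmul t ht w hw)

section Dual

variable {E : Type*} [NormedAddCommGroup E] [NormedSpace ℝ E] {T : Set E}

theorem nonneg_of_mem_dualCone_of_mem_closure {z : E →L[ℝ] ℝ} (hz : z ∈ dualCone T) {v : E}
    (hv : v ∈ closure T) : 0 ≤ z v :=
  closure_minimal hz (isClosed_Ici.preimage z.continuous) hv

theorem eq_zero_or_pos_of_mem_dualCone (hT : IsOpen T) {z : E →L[ℝ] ℝ} (hz : z ∈ dualCone T)
    {x : E} (hx : x ∈ T) : z = 0 ∨ 0 < z x := by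
  refine (hz x hx).eq_or_lt.imp (fun hzx => ?_) id
  -- `x` is a local minimum of `z`, so the derivative of `z`, which is `z` itself, vanishes.
  have hmin : IsLocalMin z x :=
    Filter.mem_of_superset (hT.mem_nhds hx) fun u hu => hzx ▸ hz u hu
  exact hmin.hasFDerivAt_eq_zero z.hasFDerivAt

theorem div_le_iff_of_mem_dualCone (hT : IsOpen T) {z : E →L[ℝ] ℝ} (hz : z ∈ dualCone T)
    {x : E} (hx : x ∈ T) (y : E) {l : ℝ} (hl : 0 ≤ l) :
    z y / z x ≤ l ↔ 0 ≤ z (l • x - y) := by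
  rw [map_sub, map_smul, smul_eq_mul, sub_nonneg]
  rcases eq_zero_or_pos_of_mem_dualCone hT hz hx with rfl | hzx
  · simpa using hl
  · exact div_le_iff₀ hzx

end Dual

namespace IsOpenCone

variable {E : Type*} [NormedAddCommGroup E] [NormedSpace ℝ E] {T : Set E}

def toConvexCone (hT : IsOpenCone T) : ConvexCone ℝ E where
  carrier := T
  smul_mem' c hc u hu := hT.2.2.2.1 c hc u hu
  add_mem' u hu v hv := by
    obtain ⟨-, -, hconv, hsmul, -⟩ := hT
    have hmid : (1 / 2 : ℝ) • u + (1 / 2 : ℝ) • v ∈ T :=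
      hconv hu hv (by norm_num) (by norm_num) (by norm_num)
    have := hsmul 2 two_pos _ hmid
    rwa [smul_add, smul_smul, smul_smul, mul_one_div_cancel two_ne_zero, one_smul,
      one_smul] at this

theorem zero_mem_closure (hT : IsOpenCone T) : (0 : E) ∈ closure T :=
  zero_mem_closure_of_smul_mem hT.1 hT.2.2.2.1

def closureCone (hT : IsOpenCone T) : ProperCone ℝ E where
  toSubmodule := hT.toConvexCone.closure.toPointedCone hT.zero_mem_closure
  isClosed' := isClosed_closure

theorem exists_mem_dualCone_apply_neg (hT : IsOpenCone T) {p : E} (hp : p ∉ closure T) :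
    ∃ z ∈ dualCone T, z p < 0 := by
  obtain ⟨z, hz, hzp⟩ := hT.closureCone.hyperplane_separation_point hp
  exact ⟨z, fun u hu => hz u (subset_closure hu), hzp⟩

theorem mem_closure_iff_forall_dualCone (hT : IsOpenCone T) {v : E} :
    v ∈ closure T ↔ ∀ z ∈ dualCone T, 0 ≤ z v := by
  refine ⟨fun hv z hz => nonneg_of_mem_dualCone_of_mem_closure hz hv, fun h => ?_⟩
  by_contra hv
  obtain ⟨z, hz, hzv⟩ := hT.exists_mem_dualCone_apply_neg hv
  exact (h z hz).not_gt hzv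

theorem setOf_smul_sub_mem_closure_eq (hT : IsOpenCone T) {x : E} (hx : x ∈ T) (y : E) :
    {l : ℝ | 0 < l ∧ l • x - y ∈ closure T} =
      Ioi 0 ∩ upperBounds {r : ℝ | ∃ z : E →L[ℝ] ℝ, z ∈ dualCone T ∧ r = z y / z x} := by
  ext l
  refine and_congr_right fun hl => ?_
  rw [hT.mem_closure_iff_forall_dualCone]
  constructor
  · rintro h r ⟨z, hz, rfl⟩
    exact (div_le_iff_of_mem_dualCone hT.2.1 hz hx y hl.le).2 (h z hz)
  · exact fun h z hz => (div_le_iff_of_mem_dualCone hT.2.1 hz hx y hl.le).1 (h ⟨z, hz, rfl⟩)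

end IsOpenCone

/-- dual formula for the gauge `M_T(y/x)`. -/
theorem funkM_eq_sSup_dual (T : Set V) (hT : IsOpenCone T) (y : V) (x : V) (hx : x ∈ T) :
    funkM T y x = sSup {r : ℝ | ∃ z : V →L[ℝ] ℝ, z ∈ dualCone T ∧ r = z y / z x} := by
  have hzero : (0 : ℝ) ∈ {r : ℝ | ∃ z : V →L[ℝ] ℝ, z ∈ dualCone T ∧ r = z y / z x} :=
    ⟨0, fun _ _ => le_rfl, by simp⟩
  rw [funkM, hT.setOf_smul_sub_mem_closure_eq hx y, Real.sInf_Ioi_inter_upperBounds hzero]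
end

section
/- For an open convex cone T in a finite-dimensional real vector space, the map (x,y) ↦ M_T(y/x) := inf{λ > 0 : λx − y ∈ closure(T)} is jointly continuous on T × V. -/
open Set Filter Topology

variable {V : Type*} [NormedAddCommGroup V] [NormedSpace ℝ V] [FiniteDimensional ℝ V]

lemma closure_add_self_mem {T : Set V} (hT : IsOpenCone T) {u v : V}
    (hu : u ∈ closure T) (hv : v ∈ T) : u + v ∈ T := by
  obtain ⟨hne, hopen, hconv, hsmul, -⟩ := hT
  have h := hconv.combo_interior_closure_mem_interior (by rwa [hopen.interior_eq]) hu
      (by norm_num : (0:ℝ) < 1/2) (by norm_num : (0:ℝ) ≤ 1/2) (by norm_num)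
  rw [hopen.interior_eq] at h
  have h2 := hsmul 2 (by norm_num) _ h
  rw [smul_add, smul_smul, smul_smul] at h2
  norm_num at h2
  rwa [add_comm]

lemma funkS_nonempty {T : Set V} (hT : IsOpenCone T) {x : V} (hx : x ∈ T) (y : V) :
    {l : ℝ | 0 < l ∧ l • x - y ∈ closure T}.Nonempty := by
  obtain ⟨ε, hε, hball⟩ := Metric.isOpen_iff.1 hT.2.1 x hx
  set l : ℝ := ‖y‖ / ε + 1 with hl
  have hl0 : 0 < l := by positivity
  refine ⟨l, hl0, ?_⟩
  have hmem : x - l⁻¹ • y ∈ T := by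
    apply hball
    rw [Metric.mem_ball, dist_eq_norm]
    have : x - l⁻¹ • y - x = -(l⁻¹ • y) := by abel
    rw [this, norm_neg, norm_smul, norm_inv, Real.norm_eq_abs, abs_of_pos hl0]
    rw [inv_mul_lt_iff₀ hl0, hl]
    have h1 : ε * (‖y‖ / ε) = ‖y‖ := by field_simp
    nlinarith [norm_nonneg y]
  have h2 := hT.2.2.2.1 l hl0 _ hmem
  rw [smul_sub, smul_inv_smul₀ (ne_of_gt hl0)] at h2
  exact subset_closure h2

/-- the gauge `(x, y) ↦ M_T(y/x)` is jointly continuous on `T × V`. -/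
theorem funkM_continuousOn (T : Set V) (hT : IsOpenCone T) :
    ContinuousOn (fun p : V × V => funkM T p.2 p.1) (T ×ˢ (univ : Set V)) := by
  intro p hp
  have hx : p.1 ∈ T := hp.1
  have hbdd : ∀ q : V × V, BddBelow {l : ℝ | 0 < l ∧ l • q.1 - q.2 ∈ closure T} :=
    fun q => ⟨0, fun l hl => hl.1.le⟩
  have hnonneg : ∀ q : V × V, 0 ≤ funkM T q.2 q.1 := fun q =>
    Real.sInf_nonneg (fun l hl => hl.1.le)
  rw [ContinuousWithinAt, tendsto_order]
  constructor
  · intro a ha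
    rcases lt_or_ge a 0 with h0 | h0
    · exact Filter.Eventually.of_forall fun q => h0.trans_le (hnonneg q)
    · set l : ℝ := (a + funkM T p.2 p.1) / 2 with hldef
      have hla : a < l := by simp only [hldef]; linarith
      have hl0 : 0 < l := lt_of_le_of_lt h0 hla
      have hlM : l < funkM T p.2 p.1 := by simp only [hldef]; linarith
      have hnot : l • p.1 - p.2 ∉ closure T := by
        intro hmem
        have : funkM T p.2 p.1 ≤ l := csInf_le (hbdd p) ⟨hl0, hmem⟩
        linarith
      have hcont : ContinuousAt (fun q : V × V => l • q.1 - q.2) p := by fun_prop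
      have hev : ∀ᶠ q in 𝓝 p, l • q.1 - q.2 ∈ (closure T)ᶜ :=
        hcont.eventually_mem (isClosed_closure.isOpen_compl.mem_nhds hnot)
      filter_upwards [hev.filter_mono nhdsWithin_le_nhds, self_mem_nhdsWithin] with q hq hqs
      have hq1 : q.1 ∈ T := hqs.1
      refine hla.trans_le (le_csInf (funkS_nonempty hT hq1 q.2) ?_)
      intro m hm
      by_contra hcon
      push_neg at hcon
      apply hq
      have heq : l • q.1 - q.2 = (m • q.1 - q.2) + (l - m) • q.1 := by
        rw [sub_smul]; abel
      rw [heq]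
      exact subset_closure (closure_add_self_mem hT hm.2
        (hT.2.2.2.1 _ (by linarith) _ hq1))
  · intro a ha
    have hM0 := hnonneg p
    set l : ℝ := (funkM T p.2 p.1 + a) / 2 with hldef
    have hMl : funkM T p.2 p.1 < l := by simp only [hldef]; linarith
    have hla : l < a := by simp only [hldef]; linarith
    have hl0 : 0 < l := lt_of_le_of_lt hM0 hMl
    obtain ⟨m, hmS, hml⟩ := exists_lt_of_csInf_lt (funkS_nonempty hT hx p.2) hMl
    have hmem : l • p.1 - p.2 ∈ T := by
      have heq : l • p.1 - p.2 = (m • p.1 - p.2) + (l - m) • p.1 := by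
        rw [sub_smul]; abel
      rw [heq]
      exact closure_add_self_mem hT hmS.2 (hT.2.2.2.1 _ (by linarith) _ hx)
    have hcont : ContinuousAt (fun q : V × V => l • q.1 - q.2) p := by fun_prop
    have hev := hcont.eventually_mem (hT.2.1.mem_nhds hmem)
    filter_upwards [hev.filter_mono nhdsWithin_le_nhds] with q hq
    exact lt_of_le_of_lt (csInf_le (hbdd q) ⟨hl0, subset_closure hq⟩) hla
end

section
/- Let T be an open convex cone in a finite-dimensional vector space and z ∈ [0]_T. Then for all x, y ∈ T and α > 0 with (1−α)z + αx ∈ T, the Funk distance satisfies F_T((1−α)z + αx, y) = log α + F_T(x, y), and similarly F_T(x, (1−α)z + αy) = −log α + F_T(x, y) whenever (1−α)z + αy ∈ T. -/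
open Set Filter Topology

variable {V : Type*} [NormedAddCommGroup V] [NormedSpace ℝ V] [FiniteDimensional ℝ V]

open Pointwise

set_option linter.unusedSectionVars false

lemma IsOpenCone.smul_closure {T : Set V} (hT : IsOpenCone T) {c : ℝ} (hc : 0 < c) {u : V}
    (hu : u ∈ closure T) : c • u ∈ closure T :=
  map_mem_closure (continuous_const_smul c) hu fun v hv => hT.2.2.2.1 c hc v hv

lemma IsOpenCone.add_closure {T : Set V} (hT : IsOpenCone T) {u v : V}
    (hu : u ∈ closure T) (hv : v ∈ closure T) : u + v ∈ closure T := by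
  have hmid : (1/2 : ℝ) • u + (1/2 : ℝ) • v ∈ closure T :=
    hT.2.2.1.closure hu hv (by norm_num) (by norm_num) (by norm_num)
  have h2 := hT.smul_closure (c := 2) (by norm_num) hmid
  convert h2 using 1
  module

lemma IsOpenCone.mem_add_closure {T : Set V} (hT : IsOpenCone T) {t c : V}
    (ht : t ∈ T) (hc : c ∈ closure T) : t + c ∈ T := by
  have hmid : (1/2 : ℝ) • t + (1/2 : ℝ) • c ∈ interior T := by
    apply hT.2.2.1.combo_interior_closure_mem_interior _ hc (by norm_num) (by norm_num)
      (by norm_num)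
    rwa [hT.2.1.interior_eq]
  rw [hT.2.1.interior_eq] at hmid
  have h2 := hT.2.2.2.1 2 (by norm_num) _ hmid
  convert h2 using 1
  module

/-- homogeneity of the Funk metric along a point `z ∈ [0]_T`. -/
theorem funkF_segment_homogeneous (T : Set V) (hT : IsOpenCone T) (z : V)
    (hz : -z ∈ closure T ∧ z ∈ closure T) (x y : V) (hx : x ∈ T) (hy : y ∈ T)
    (a : ℝ) (ha : 0 < a) (h1 : (1 - a) • z + a • x ∈ T) (h2 : (1 - a) • z + a • y ∈ T) :
    funkF T ((1 - a) • z + a • x) y = Real.log a + funkF T x y ∧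
    funkF T x ((1 - a) • z + a • y) = -Real.log a + funkF T x y := by
  -- any real multiple of z is in the closure
  have hzc : ∀ c : ℝ, c • z ∈ closure T := by
    intro c
    rcases lt_trichotomy c 0 with h | h | h
    · have hh := hT.smul_closure (c := -c) (by linarith) hz.1
      convert hh using 1; module
    · subst h
      have h0 : (0:V) ∈ closure T := by
        have hh := hT.add_closure hz.1 hz.2
        simpa using hh
      simpa using h0
    · exact hT.smul_closure h hz.2
  -- shift by multiples of z preserves closure membership
  have hshift : ∀ (u : V) (c : ℝ), u ∈ closure T ↔ u + c • z ∈ closure T := by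
    intro u c
    constructor
    · intro hu; exact hT.add_closure hu (hzc c)
    · intro hu
      have hh := hT.add_closure hu (hzc (-c))
      convert hh using 1; module
  -- positive scaling preserves closure membership
  have hscale : ∀ (c : ℝ), 0 < c → ∀ u : V, (u ∈ closure T ↔ c • u ∈ closure T) := by
    intro c hc u
    constructor
    · exact hT.smul_closure hc
    · intro hcu
      have hh := hT.smul_closure (c := c⁻¹) (by positivity) hcu
      rwa [smul_smul, inv_mul_cancel₀ (ne_of_gt hc), one_smul] at hh
  set S : Set ℝ := {l : ℝ | 0 < l ∧ l • y - x ∈ closure T} with hS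
  -- S is nonempty
  have hSne : S.Nonempty := by
    have hcont : ContinuousAt (fun t : ℝ => y - t • x) 0 := by fun_prop
    have hTy : T ∈ 𝓝 ((fun t : ℝ => y - t • x) 0) := by
      simpa using hT.2.1.mem_nhds hy
    have hev := hcont.eventually_mem hTy
    rcases Metric.eventually_nhds_iff.1 hev with ⟨δ, hδ, hball⟩
    have hmem : y - (δ/2) • x ∈ T := by
      apply hball
      simp only [dist_zero_right, Real.norm_eq_abs]
      rw [abs_of_pos (by linarith)]
      linarith
    refine ⟨(δ/2)⁻¹, by positivity, ?_⟩
    apply subset_closure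
    have hh := hT.2.2.2.1 (δ/2)⁻¹ (by positivity) _ hmem
    convert hh using 1
    rw [smul_sub, smul_smul, inv_mul_cancel₀ (by positivity), one_smul]
  -- S is bounded below by 0
  have hSbdd : BddBelow S := ⟨0, fun l hl => le_of_lt hl.1⟩
  have hSpos0 : 0 ≤ sInf S := le_csInf hSne fun l hl => le_of_lt hl.1
  -- sInf S is positive
  have hM : 0 < sInf S := by
    rcases hSpos0.lt_or_eq with h | h
    · exact h
    exfalso
    have hxc : -x ∈ closure T := by
      rw [Metric.mem_closure_iff]
      intro ε hε
      set ε' : ℝ := ε / (2 * (‖y‖ + 1)) with hε'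
      have hε'pos : 0 < ε' := by positivity
      have hlt : sInf S < ε' := by rw [← h]; exact hε'pos
      rcases (csInf_lt_iff hSbdd hSne).1 hlt with ⟨l, hlS, hl⟩
      have hwc : l • y - x ∈ closure T := hlS.2
      rcases Metric.mem_closure_iff.1 hwc (ε/2) (by linarith) with ⟨b, hb, hdist⟩
      refine ⟨b, hb, ?_⟩
      have hd1 : dist (-x) (l • y - x) = ‖l • y‖ := by
        rw [dist_eq_norm, show -x - (l • y - x) = -(l • y) by abel, norm_neg]
      have hd2 : ‖l • y‖ < ε / 2 := by
        rw [norm_smul, Real.norm_eq_abs, abs_of_pos hlS.1]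
        calc l * ‖y‖ ≤ l * (‖y‖ + 1) := by nlinarith [hlS.1.le]
          _ < ε' * (‖y‖ + 1) := by
              exact mul_lt_mul_of_pos_right hl (by positivity)
          _ = ε / 2 := by
              rw [hε']
              field_simp
      calc dist (-x) b ≤ dist (-x) (l • y - x) + dist (l • y - x) b := dist_triangle _ _ _
        _ < ε/2 + ε/2 := by rw [hd1]; exact add_lt_add hd2 hdist
        _ = ε := by ring
    exact hT.2.2.2.2 (by simpa using hT.mem_add_closure hx hxc)
  have hMne : sInf S ≠ 0 := ne_of_gt hM
  -- first set equality
  have hA : {l : ℝ | 0 < l ∧ l • y - ((1 - a) • z + a • x) ∈ closure T} = a • S := by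
    ext l
    rw [Set.mem_smul_set_iff_inv_smul_mem₀ (ne_of_gt ha)]
    simp only [hS, Set.mem_setOf_eq, smul_eq_mul]
    constructor
    · rintro ⟨hl, hmem⟩
      refine ⟨by positivity, ?_⟩
      have hmem' : l • y - a • x ∈ closure T := by
        have hh := (hshift (l • y - ((1 - a) • z + a • x)) (1 - a)).1 hmem
        convert hh using 1; module
      rw [hscale a ha]
      convert hmem' using 1
      rw [smul_sub, smul_smul]
      congr 2
      field_simp
    · rintro ⟨hl, hmem⟩
      have hl' : 0 < l := by
        by_contra hc
        push_neg at hc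
        have hle : a⁻¹ * l ≤ 0 := mul_nonpos_of_nonneg_of_nonpos (by positivity) hc
        linarith
      refine ⟨hl', ?_⟩
      have hmem' : l • y - a • x ∈ closure T := by
        have hh := hT.smul_closure ha hmem
        convert hh using 1
        rw [smul_sub, smul_smul]
        congr 2
        field_simp
      have hh := (hshift (l • y - a • x) (-(1 - a))).1 hmem'
      convert hh using 1; module
  -- second set equality
  have hB : {l : ℝ | 0 < l ∧ l • ((1 - a) • z + a • y) - x ∈ closure T} = a⁻¹ • S := by
    ext l
    rw [Set.mem_smul_set_iff_inv_smul_mem₀ (by positivity : (a:ℝ)⁻¹ ≠ 0)]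
    simp only [hS, Set.mem_setOf_eq, smul_eq_mul, inv_inv]
    constructor
    · rintro ⟨hl, hmem⟩
      refine ⟨by positivity, ?_⟩
      have hh := (hshift (l • ((1 - a) • z + a • y) - x) (-(l * (1 - a)))).1 hmem
      convert hh using 1
      module
    · rintro ⟨hl, hmem⟩
      have hl' : 0 < l := by
        by_contra hc
        push_neg at hc
        have hle : a * l ≤ 0 := mul_nonpos_of_nonneg_of_nonpos ha.le hc
        linarith
      refine ⟨hl', ?_⟩
      have hh := (hshift ((a * l) • y - x) (l * (1 - a))).1 hmem
      convert hh using 1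
      module
  have hMA : funkM T ((1 - a) • z + a • x) y = a * sInf S := by
    show sInf {l : ℝ | 0 < l ∧ l • y - ((1 - a) • z + a • x) ∈ closure T} = a * sInf S
    rw [hA, Real.sInf_smul_of_nonneg ha.le, smul_eq_mul]
  have hMB : funkM T x ((1 - a) • z + a • y) = a⁻¹ * sInf S := by
    show sInf {l : ℝ | 0 < l ∧ l • ((1 - a) • z + a • y) - x ∈ closure T} = a⁻¹ * sInf S
    rw [hB, Real.sInf_smul_of_nonneg (by positivity), smul_eq_mul]
  have hMS : funkM T x y = sInf S := rfl
  constructor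
  · rw [funkF, hMA, Real.log_mul (ne_of_gt ha) hMne, funkF, hMS]
  · rw [funkF, hMB, Real.log_mul (by positivity) hMne, funkF, hMS, Real.log_inv]
end

section
/- Let C be an open convex cone in a finite-dimensional vector space with basepoint b ∈ C. Then the family of functions {j_{T,x} : T ∈ 𝒯(C), x ∈ T}, where j_{T,x}(y) := M_T(y/x)/M_T(b/x), is equi-Lipschitzian: there is a single Lipschitz constant valid for all members. -/
open Set Filter Topology

variable {V : Type*} [NormedAddCommGroup V] [NormedSpace ℝ V] [FiniteDimensional ℝ V]

/-- The family `𝒯(C)` of iterated open tangent cones of `C` (including `C` itself). -/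
inductive IterTangent {W : Type*} [NormedAddCommGroup W] [NormedSpace ℝ W] (C : Set W) :
    Set W → Prop
  | base : IterTangent C C
  | step (T : Set W) (x : W) : IterTangent C T → x ∈ frontier T →
      IterTangent C (openTangent T x)

/-!
For `x ∈ T`, `y ↦ M_T(y/x)` is the Minkowski gauge of the closed convex neighbourhood
`x - closure T` of `0`, so `y ↦ M_T(y/x) / m` with `m = M_T(b/x)` is the gauge of
`m • (x - closure T)`. The infimum `m` is attained, i.e. `m • x - b ∈ closure T`; hence if
`ball b r ⊆ C ⊆ T`, then `m • x - v = (m • x - b) + (b - v) ∈ closure T` whenever `‖v‖ < r`, so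
the rescaled set contains `ball 0 r` and its gauge is `r⁻¹`-Lipschitz. Every `T ∈ 𝒯(C)` is an
open cone containing `C`, so `r` depends on `C` and `b` only.
-/

open scoped Pointwise NNReal

variable {E : Type*} [NormedAddCommGroup E] [NormedSpace ℝ E] {T : Set E}

namespace IsOpenCone

lemma isOpen (hT : IsOpenCone T) : IsOpen T := hT.2.1

lemma convex (hT : IsOpenCone T) : Convex ℝ T := hT.2.2.1

lemma smul_mem (hT : IsOpenCone T) {c : ℝ} (hc : 0 < c) {u : E} (hu : u ∈ T) : c • u ∈ T :=
  hT.2.2.2.1 c hc u hu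

lemma zero_notMem (hT : IsOpenCone T) : (0 : E) ∉ T := hT.2.2.2.2

lemma smul_mem_closure (hT : IsOpenCone T) {c : ℝ} (hc : 0 < c) {u : E} (hu : u ∈ closure T) :
    c • u ∈ closure T :=
  map_mem_closure (continuous_const_smul c) hu fun _ ↦ hT.smul_mem hc

lemma smul_mem_closure_iff (hT : IsOpenCone T) {c : ℝ} (hc : 0 < c) {u : E} :
    c • u ∈ closure T ↔ u ∈ closure T :=
  ⟨fun h ↦ by simpa [smul_smul, hc.ne'] using hT.smul_mem_closure (inv_pos.2 hc) h,
    hT.smul_mem_closure hc⟩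

lemma add_mem_closure (hT : IsOpenCone T) {u w : E} (hu : u ∈ closure T) (hw : w ∈ closure T) :
    u + w ∈ closure T := by
  have hmid : (1 / 2 : ℝ) • u + (1 / 2 : ℝ) • w ∈ closure T :=
    hT.convex.closure hu hw (by norm_num) (by norm_num) (by norm_num)
  convert hT.smul_mem_closure two_pos hmid using 1
  module

lemma add_mem_of_mem_closure (hT : IsOpenCone T) {u w : E} (hu : u ∈ T) (hw : w ∈ closure T) :
    u + w ∈ T := by
  have hmid : (1 / 2 : ℝ) • u + (1 / 2 : ℝ) • w ∈ T := by
    simpa [hT.isOpen.interior_eq] using hT.convex.combo_interior_closure_mem_interior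
      (by rwa [hT.isOpen.interior_eq]) hw (by norm_num : (0 : ℝ) < 1 / 2) (by norm_num)
      (by norm_num)
  convert hT.smul_mem two_pos hmid using 1
  module

end IsOpenCone

lemma mem_openTangent_iff {x v : E} : v ∈ openTangent T x ↔ ∃ l : ℝ, 0 < l ∧ x + l⁻¹ • v ∈ T := by
  constructor
  · rintro ⟨l, hl, w, hw, rfl⟩
    exact ⟨l, hl, by simpa [smul_smul, hl.ne'] using hw⟩
  · rintro ⟨l, hl, hw⟩
    exact ⟨l, hl, _, hw, by simp [smul_smul, hl.ne']⟩

lemma isOpen_openTangent (hT : IsOpen T) (x : E) : IsOpen (openTangent T x) := by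
  have : openTangent T x = ⋃ l ∈ Ioi (0 : ℝ), (fun v ↦ x + l⁻¹ • v) ⁻¹' T := by
    ext v
    simp [mem_openTangent_iff]
  rw [this]
  exact isOpen_biUnion fun l _ ↦ hT.preimage (by fun_prop)

lemma smul_mem_openTangent {x v : E} {c : ℝ} (hc : 0 < c) (hv : v ∈ openTangent T x) :
    c • v ∈ openTangent T x := by
  obtain ⟨l, hl, w, hw, rfl⟩ := hv
  exact ⟨c * l, mul_pos hc hl, w, hw, by rw [smul_smul]⟩

lemma add_mem_openTangent (hT : Convex ℝ T) {x v₁ v₂ : E} (hv₁ : v₁ ∈ openTangent T x)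
    (hv₂ : v₂ ∈ openTangent T x) : v₁ + v₂ ∈ openTangent T x := by
  obtain ⟨l₁, hl₁, w₁, hw₁, rfl⟩ := hv₁
  obtain ⟨l₂, hl₂, w₂, hw₂, rfl⟩ := hv₂
  have hl : 0 < l₁ + l₂ := add_pos hl₁ hl₂
  refine ⟨l₁ + l₂, hl, (l₁ / (l₁ + l₂)) • w₁ + (l₂ / (l₁ + l₂)) • w₂,
    hT hw₁ hw₂ (by positivity) (by positivity) (by field_simp), ?_⟩
  rw [smul_sub (l₁ + l₂), smul_add, smul_smul, smul_smul, mul_div_cancel₀ _ hl.ne',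
    mul_div_cancel₀ _ hl.ne']
  module

lemma convex_openTangent (hT : Convex ℝ T) (x : E) : Convex ℝ (openTangent T x) :=
  (⟨openTangent T x, fun _ hc _ ↦ smul_mem_openTangent hc,
    fun _ hv₁ _ hv₂ ↦ add_mem_openTangent hT hv₁ hv₂⟩ : ConvexCone ℝ E).convex

namespace IsOpenCone

lemma subset_openTangent (hT : IsOpenCone T) {x : E} (hx : x ∈ closure T) :
    T ⊆ openTangent T x :=
  fun w hw ↦ ⟨1, one_pos, w + x, hT.add_mem_of_mem_closure hw hx, by simp⟩

protected lemma openTangent (hT : IsOpenCone T) {x : E} (hx : x ∈ frontier T) :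
    IsOpenCone (openTangent T x) := by
  have hxT : x ∉ T := (hT.isOpen.frontier_eq ▸ hx).2
  refine ⟨hT.1.mono (hT.subset_openTangent hx.1), isOpen_openTangent hT.isOpen x,
    convex_openTangent hT.convex x, ?_, ?_⟩
  · exact fun c hc v ↦ smul_mem_openTangent hc
  · rintro ⟨l, hl, w, hw, h⟩
    rw [eq_comm, smul_eq_zero, sub_eq_zero] at h
    exact hxT (h.resolve_left hl.ne' ▸ hw)

end IsOpenCone

namespace IterTangent

variable {C : Set E}

lemma isOpenCone (hC : IsOpenCone C) (h : IterTangent C T) : IsOpenCone T := by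
  induction h with
  | base => exact hC
  | step T x _ hx ih => exact ih.openTangent hx

lemma subset (hC : IsOpenCone C) (h : IterTangent C T) : C ⊆ T := by
  induction h with
  | base => exact subset_rfl
  | step T x hT hx ih => exact ih.trans ((hT.isOpenCone hC).subset_openTangent hx.1)

end IterTangent

def funkBall (T : Set E) (x : E) : Set E := {v | x - v ∈ closure T}

lemma convex_funkBall (hT : Convex ℝ T) (x : E) : Convex ℝ (funkBall T x) := by
  intro u hu v hv a c ha hc hac
  have h : x - (a • u + c • v) = a • (x - u) + c • (x - v) := by
    linear_combination (norm := module) -(hac • x)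
  exact (show x - (a • u + c • v) ∈ closure T from h ▸ hT.closure hu hv ha hc hac)

namespace IsOpenCone

variable {x : E}

lemma funkM_eq_gauge (hT : IsOpenCone T) (y : E) : funkM T y x = gauge (funkBall T x) y := by
  rw [funkM, gauge_def']
  congr 1
  ext l
  simp only [Set.mem_ofPred_eq, mem_Ioi, funkBall, and_congr_right_iff]
  intro hl
  rw [← hT.smul_mem_closure_iff hl (u := x - l⁻¹ • y), smul_sub, smul_inv_smul₀ hl.ne']

lemma funkM_set_nonempty (hT : IsOpenCone T) (hx : x ∈ T) (y : E) :
    {l : ℝ | 0 < l ∧ l • x - y ∈ closure T}.Nonempty := by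
  have hlim : Tendsto (fun l : ℝ ↦ x - l⁻¹ • y) atTop (𝓝 x) := by
    simpa using tendsto_const_nhds.sub ((tendsto_inv_atTop_zero (𝕜 := ℝ)).smul_const y)
  obtain ⟨l, hl, hmem⟩ :=
    ((eventually_gt_atTop 0).and (hlim.eventually (hT.isOpen.mem_nhds hx))).exists
  exact ⟨l, hl, subset_closure (by simpa [smul_sub, hl.ne'] using hT.smul_mem hl hmem)⟩

lemma funkM_smul_sub_mem_closure (hT : IsOpenCone T) (hx : x ∈ T) (y : E) :
    funkM T y x • x - y ∈ closure T := by
  have hclosed : IsClosed {l : ℝ | l • x - y ∈ closure T} :=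
    isClosed_closure.preimage (by fun_prop : Continuous fun l : ℝ ↦ l • x - y)
  exact hclosed.closure_subset_iff.2 (fun l hl ↦ hl.2)
    (csInf_mem_closure (hT.funkM_set_nonempty hx y) ⟨0, fun l hl ↦ hl.1.le⟩)

lemma funkM_pos (hT : IsOpenCone T) (hx : x ∈ T) {y : E} (hy : y ∈ T) : 0 < funkM T y x := by
  have hnonneg : 0 ≤ funkM T y x := Real.sInf_nonneg fun l hl ↦ hl.1.le
  refine hnonneg.lt_of_ne fun h ↦ hT.zero_notMem ?_
  have hneg := hT.funkM_smul_sub_mem_closure hx y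
  rw [← h, zero_smul, zero_sub] at hneg
  simpa using hT.add_mem_of_mem_closure hy hneg

lemma ball_subset_smul_funkBall (hT : IsOpenCone T) (hx : x ∈ T) {b : E} {r : ℝ} (hr : 0 < r)
    (hbr : Metric.ball b r ⊆ T) : Metric.ball 0 r ⊆ funkM T b x • funkBall T x := by
  intro v hv
  have hm := hT.funkM_pos hx (hbr (Metric.mem_ball_self hr))
  have hbv : b - v ∈ T := hbr (by simpa [dist_eq_norm] using hv)
  have hmv : funkM T b x • x - v ∈ closure T := by
    simpa using hT.add_mem_closure (hT.funkM_smul_sub_mem_closure hx b) (subset_closure hbv)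
  rw [Set.mem_smul_set_iff_inv_smul_mem₀ hm.ne', funkBall, Set.mem_ofPred_eq,
    ← hT.smul_mem_closure_iff hm, smul_sub, smul_inv_smul₀ hm.ne']
  exact hmv

lemma lipschitzWith_funkM_div (hT : IsOpenCone T) (hx : x ∈ T) {b : E} {r : ℝ≥0} (hr : 0 < r)
    (hbr : Metric.ball b r ⊆ T) : LipschitzWith r⁻¹ fun y ↦ funkM T y x / funkM T b x := by
  have hm := hT.funkM_pos hx (hbr (Metric.mem_ball_self hr))
  have hgauge : (fun y ↦ funkM T y x / funkM T b x) = gauge (funkM T b x • funkBall T x) := by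
    ext y
    rw [gauge_smul_left_of_nonneg hm.le, Pi.smul_apply, smul_eq_mul, hT.funkM_eq_gauge y,
      div_eq_inv_mul]
  rw [hgauge]
  exact ((convex_funkBall hT.convex x).smul _).lipschitzWith_gauge hr
    (hT.ball_subset_smul_funkBall hx hr hbr)

end IsOpenCone

/-- the family `{j_{T,x} : T ∈ 𝒯(C), x ∈ T}` is equi-Lipschitzian. -/
theorem equiLipschitz_funk_gauges (C : Set V) (hC : IsOpenCone C) (b : V) (hb : b ∈ C) :
    ∃ K : NNReal, ∀ T : Set V, IterTangent C T → ∀ x ∈ T,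
      LipschitzWith K (fun y : V => funkM T y x / funkM T b x) := by
  obtain ⟨ε, hε, hball⟩ := Metric.isOpen_iff.1 hC.isOpen b hb
  refine ⟨(⟨ε, hε.le⟩ : ℝ≥0)⁻¹, fun T hT x hx ↦ ?_⟩
  exact (hT.isOpenCone hC).lipschitzWith_funkM_div hx (r := ⟨ε, hε.le⟩) hε
    (hball.trans (hT.subset hC))
end

section
/- Let C be an open convex cone, T ∈ 𝒯(C), and x ∈ T. With Z_{T,x} := T* ∩ {z : M_T(b/x)⟨z,x⟩ ≤ 1}, one has C* ∩ (Z_{T,x} − C*) = C* ∩ Z_{T,x}, where Z_{T,x} − C* := {y − w : y ∈ Z_{T,x}, w ∈ C*}. -/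
open Set Filter Topology

variable {V : Type*} [NormedAddCommGroup V] [NormedSpace ℝ V] [FiniteDimensional ℝ V]

/-- Each iterated tangent cone is nonempty and closed under positive scaling. -/
lemma iterTangent_cone (C : Set V) (hC : IsOpenCone C) (T : Set V) (hT : IterTangent C T) :
    T.Nonempty ∧ (∀ c : ℝ, 0 < c → ∀ u ∈ T, c • u ∈ T) := by
  induction hT with
  | base => exact ⟨hC.1, hC.2.2.2.1⟩
  | step T x hT hx ih =>
    obtain ⟨⟨v, hv⟩, hscale⟩ := ih
    refine ⟨⟨(1:ℝ) • (v - x), 1, one_pos, v, hv, rfl⟩, ?_⟩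
    rintro c hc u ⟨l, hl, w, hw, rfl⟩
    exact ⟨c * l, mul_pos hc hl, w, hw, smul_smul c l _⟩

/-- nonneg on closure -/
lemma nonneg_closure {T : Set V} {z : V →L[ℝ] ℝ} (hz : z ∈ dualCone T) {y : V}
    (hy : y ∈ closure T) : 0 ≤ z y := by
  have : closure T ⊆ {v | 0 ≤ z v} := closure_minimal hz (isClosed_le continuous_const z.continuous)
  exact this hy

/-- The dual of an iterated tangent cone is an extreme face of `C*`. -/
lemma dual_face (C : Set V) (hC : IsOpenCone C) (T : Set V) (hT : IterTangent C T) :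
    ∀ z w : V →L[ℝ] ℝ, z ∈ dualCone C → w ∈ dualCone C → z + w ∈ dualCone T →
      z ∈ dualCone T ∧ w ∈ dualCone T := by
  induction hT with
  | base => exact fun z w hz hw _ => ⟨hz, hw⟩
  | step T x hT hx ih =>
    intro z w hz hw hzw
    obtain ⟨⟨v₀, hv₀⟩, hscale⟩ := iterTangent_cone C hC T hT
    -- Step 1: dual of tangent cone is contained in dual of T
    have hsub : ∀ u : V →L[ℝ] ℝ, u ∈ dualCone (openTangent T x) → u ∈ dualCone T := by
      intro u hu v hv
      by_contra hneg
      push_neg at hneg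
      have key : ∀ t : ℝ, 0 < t → u x ≤ t * u v := by
        intro t ht
        have := hu ((1:ℝ) • (t • v - x)) ⟨1, one_pos, t • v, hscale t ht v hv, rfl⟩
        simp [map_smul, map_sub] at this
        linarith [this]
      have h1 := key 1 one_pos
      have hx0 : u x < 0 := by linarith
      have ht : (0:ℝ) < (u x - 1) / (u v) := div_pos_of_neg_of_neg (by linarith) hneg
      have h2 := key _ ht
      rw [div_mul_cancel₀ _ (ne_of_lt hneg)] at h2
      linarith
    -- z + w ∈ T*, hence by IH z, w ∈ T*
    have hzwT : z + w ∈ dualCone T := hsub _ hzw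
    obtain ⟨hzT, hwT⟩ := ih z w hz hw hzwT
    -- Step 2: (z+w)(x) ≤ 0
    have hle : ∀ v ∈ T, (z + w) x ≤ (z + w) v := by
      intro v hv
      have := hzw ((1:ℝ) • (v - x)) ⟨1, one_pos, v, hv, rfl⟩
      simp [map_sub] at this
      simp only [ContinuousLinearMap.add_apply]
      linarith [this]
    have hzwx : (z + w) x ≤ 0 := by
      by_contra hpos
      push_neg at hpos
      have hv0 : 0 ≤ (z + w) v₀ := hzwT v₀ hv₀
      set s := (z + w) x with hs
      have hε : (0:ℝ) < s / (2 * ((z + w) v₀ + 1)) := by positivity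
      have := hle _ (hscale _ hε v₀ hv₀)
      rw [map_smul] at this
      have h2 : s ≤ s / (2 * ((z + w) v₀ + 1)) * (z + w) v₀ := this
      have hfrac : (z + w) v₀ / (2 * ((z + w) v₀ + 1)) < 1 := by
        rw [div_lt_one (by positivity)]; linarith
      have h3 : s / (2 * ((z + w) v₀ + 1)) * (z + w) v₀
          = s * ((z + w) v₀ / (2 * ((z + w) v₀ + 1))) := by ring
      have h4 : s * ((z + w) v₀ / (2 * ((z + w) v₀ + 1))) < s * 1 :=
        mul_lt_mul_of_pos_left hfrac hpos
      rw [h3] at h2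
      linarith
    -- x ∈ closure T, so z x ≥ 0 and w x ≥ 0
    have hxcl : x ∈ closure T := hx.1
    have hzx : 0 ≤ z x := nonneg_closure hzT hxcl
    have hwx : 0 ≤ w x := nonneg_closure hwT hxcl
    have hzx0 : z x ≤ 0 := by simp only [ContinuousLinearMap.add_apply] at hzwx; linarith
    have hwx0 : w x ≤ 0 := by simp only [ContinuousLinearMap.add_apply] at hzwx; linarith
    constructor
    · rintro u ⟨l, hl, v, hv, rfl⟩
      rw [map_smul, map_sub]
      have := hzT v hv
      have : 0 ≤ z v - z x := by linarith
      positivity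
    · rintro u ⟨l, hl, v, hv, rfl⟩
      rw [map_smul, map_sub]
      have := hwT v hv
      have : 0 ≤ w v - w x := by linarith
      positivity

/-- for `T ∈ 𝒯(C)` and `x ∈ T`, with
`Z_{T,x} = T* ∩ {z : M_T(b/x)⟨z,x⟩ ≤ 1}`, one has `C* ∩ (Z_{T,x} − C*) = C* ∩ Z_{T,x}`. -/
theorem dual_intersection_Z (C : Set V) (hC : IsOpenCone C) (b : V) (hb : b ∈ C)
    (T : Set V) (hT : IterTangent C T) (x : V) (hx : x ∈ T) :
    dualCone C ∩ {z : V →L[ℝ] ℝ | ∃ u ∈ dualCone T ∩ {w : V →L[ℝ] ℝ | funkM T b x * w x ≤ 1},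
        ∃ w ∈ dualCone C, z = u - w}
      = dualCone C ∩ (dualCone T ∩ {w : V →L[ℝ] ℝ | funkM T b x * w x ≤ 1}) := by
  have hM : 0 ≤ funkM T b x :=
    Real.sInf_nonneg (fun l hl => le_of_lt hl.1)
  ext z
  simp only [Set.mem_inter_iff, Set.mem_setOf_eq]
  constructor
  · rintro ⟨hzC, u, ⟨huT, huM⟩, w, hwC, rfl⟩
    have huzw : u - w + w = u := by abel
    have hface := dual_face C hC T hT (u - w) w hzC hwC (by rw [huzw]; exact huT)
    obtain ⟨hzT, hwT⟩ := hface
    refine ⟨hzC, hzT, ?_⟩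
    have hwx : 0 ≤ w x := hwT x hx
    have hzx : (u - w) x ≤ u x := by
      simp only [ContinuousLinearMap.sub_apply]; linarith
    calc funkM T b x * (u - w) x ≤ funkM T b x * u x :=
          mul_le_mul_of_nonneg_left hzx hM
      _ ≤ 1 := huM
  · rintro ⟨hzC, hzT, hzM⟩
    exact ⟨hzC, z, ⟨hzT, hzM⟩, 0, fun v _ => le_refl 0, by simp⟩
end

section
/- Let C ⊂ ℝ^{N+1} be an open convex cone containing no lines, with bounded cross section D and basepoint b ∈ D. If a sequence (x_n) in C converges pointwise in the Hilbert sense to a horofunction h (i.e., Hil_C(·,x_n) − Hil_C(b,x_n) → h pointwise on C, with h not of the form Hil_C(·,p) − Hil_C(b,p)), then h can be written as h = ψ_x + f where x ∈ ∂C∖{0}, ψ_x := r_C(·,x) − r_C(b,x) is a reverse-Funk horofunction, and f is a limit in the Funk sense of a subsequence of (x_n) converging in the usual sense to x. -/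
open Set Filter Topology

variable {V : Type*} [NormedAddCommGroup V] [NormedSpace ℝ V] [FiniteDimensional ℝ V]

/-!
Pass to a subsequence of `xs` converging in the compact set `closure D` to some `x`; then
`x ≠ 0` because `ψ x = 1`. For `u ∈ C` the gauge `y ↦ funkM C y u` is convex and finite, hence
continuous, and it is positive on `closure C \ {0}` because `C` contains no lines; so `r_C(u, ·)` is
continuous at `x` and, as `Hil_C = F_C + r_C`, the Funk differences along the subsequence converge to
`h - ψ_x`. If `x` were in `C`, they would also converge to `F_C(·, x) - F_C(b, x)`, since `F_C(u, ·)`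
is continuous on `C` by the multiplicative triangle inequality
`funkM C y z ≤ funkM C y x * funkM C x z`; then `h = Hil_C(·, x) - Hil_C(b, x)`, which is
excluded. Hence `x ∈ ∂C`.
-/

open scoped Pointwise

lemma Real.le_mul_sInf {s : Set ℝ} (hs : s.Nonempty) {a c : ℝ} (ha : 0 ≤ a)
    (h : ∀ x ∈ s, c ≤ a * x) : c ≤ a * sInf s := by
  rw [← smul_eq_mul, ← Real.sInf_smul_of_nonneg ha]
  exact le_csInf hs.smul_set (by rintro _ ⟨x, hx, rfl⟩; exact h x hx)

variable {C : Set V} {x y z : V}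

section

omit [FiniteDimensional ℝ V]

namespace IsOpenCone

protected lemma isOpen_s17 (hC : IsOpenCone C) : IsOpen C := hC.2.1

protected lemma convex_s17 (hC : IsOpenCone C) : Convex ℝ C := hC.2.2.1

lemma zero_notMem_s17 (hC : IsOpenCone C) : (0 : V) ∉ C := hC.2.2.2.2

lemma smul_mem_s17 (hC : IsOpenCone C) {c : ℝ} (hc : 0 < c) {v : V} (hv : v ∈ C) : c • v ∈ C :=
  hC.2.2.2.1 c hc v hv

lemma smul_mem_closure_s17 (hC : IsOpenCone C) {c : ℝ} (hc : 0 < c) {v : V} (hv : v ∈ closure C) :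
    c • v ∈ closure C :=
  (MapsTo.closure (fun _ => hC.smul_mem_s17 hc) (continuous_const_smul c)) hv

lemma add_mem_closure_s17 (hC : IsOpenCone C) {v w : V} (hv : v ∈ closure C) (hw : w ∈ closure C) :
    v + w ∈ closure C := by
  have hmid := hC.convex_s17.closure hv hw (by norm_num : (0 : ℝ) ≤ 1 / 2)
    (by norm_num : (0 : ℝ) ≤ 1 / 2) (by norm_num)
  simpa [smul_add, smul_smul] using hC.smul_mem_closure_s17 two_pos hmid

end IsOpenCone

def funkSet (T : Set V) (y x : V) : Set ℝ := {l : ℝ | 0 < l ∧ l • x - y ∈ closure T}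

lemma funkM_eq_sInf : funkM C y x = sInf (funkSet C y x) := rfl

lemma funkM_nonneg : 0 ≤ funkM C y x :=
  Real.sInf_nonneg fun _ hl => hl.1.le

lemma funkM_le_of_mem {l : ℝ} (hl : l ∈ funkSet C y x) : funkM C y x ≤ l :=
  csInf_le ⟨0, fun _ hl => hl.1.le⟩ hl

lemma funkSet_nonempty (hC : IsOpenCone C) (hx : x ∈ C) (y : V) : (funkSet C y x).Nonempty := by
  have hcont : Tendsto (fun t : ℝ => x - t • y) (𝓝[>] 0) (𝓝 x) := by
    have : Continuous fun t : ℝ => x - t • y := by fun_prop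
    simpa using this.continuousWithinAt.tendsto (x := 0) (s := Ioi 0)
  obtain ⟨t, hxt, ht⟩ := ((hcont.eventually (hC.isOpen_s17.mem_nhds hx)).and self_mem_nhdsWithin).exists
  refine ⟨t⁻¹, inv_pos.2 ht, subset_closure ?_⟩
  have : t⁻¹ • (x - t • y) = t⁻¹ • x - y := by
    rw [smul_sub, smul_smul, inv_mul_cancel₀ (ne_of_gt ht), one_smul]
  exact this ▸ hC.smul_mem_s17 (inv_pos.2 ht) hxt

lemma funkM_pos (hC : IsOpenCone C) (hlines : ∀ v, v ∈ closure C → -v ∈ closure C → v = 0)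
    (hy : y ∈ closure C) (hy0 : y ≠ 0) (hx : x ∈ C) : 0 < funkM C y x := by
  refine funkM_nonneg.lt_of_ne fun h0 => hy0 (hlines y hy ?_)
  -- `l • x - y ∈ closure C` is a closed condition on `l`, so it holds at the infimum `l = 0`
  have hclosed : IsClosed {l : ℝ | l • x - y ∈ closure C} :=
    isClosed_closure.preimage (by fun_prop)
  have hinf : funkM C y x ∈ {l : ℝ | l • x - y ∈ closure C} :=
    hclosed.closure_subset_iff.2 (fun _ hl => hl.2)
      (csInf_mem_closure (funkSet_nonempty hC hx y) ⟨0, fun _ hl => hl.1.le⟩)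
  simpa [← h0] using hinf

lemma funkM_convexOn_left (hC : IsOpenCone C) (hx : x ∈ C) :
    ConvexOn ℝ univ fun y => funkM C y x := by
  refine ⟨convex_univ, fun y₁ _ y₂ _ a b ha hb hab => ?_⟩
  have key : ∀ l₁ ∈ funkSet C y₁ x, ∀ l₂ ∈ funkSet C y₂ x,
      funkM C (a • y₁ + b • y₂) x ≤ a * l₁ + b * l₂ := fun l₁ h₁ l₂ h₂ => by
    refine funkM_le_of_mem ⟨convex_Ioi (0 : ℝ) h₁.1 h₂.1 ha hb hab, ?_⟩
    rw [show (a * l₁ + b * l₂) • x - (a • y₁ + b • y₂)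
        = a • (l₁ • x - y₁) + b • (l₂ • x - y₂) by module]
    exact hC.convex_s17.closure h₁.2 h₂.2 ha hb hab
  have step : ∀ l₂ ∈ funkSet C y₂ x, funkM C (a • y₁ + b • y₂) x - b * l₂ ≤ a * funkM C y₁ x :=
    fun l₂ h₂ => Real.le_mul_sInf (funkSet_nonempty hC hx y₁) ha fun l₁ h₁ => by
      linarith [key l₁ h₁ l₂ h₂]
  have := Real.le_mul_sInf (c := funkM C (a • y₁ + b • y₂) x - a * funkM C y₁ x)
    (funkSet_nonempty hC hx y₂) hb fun l₂ h₂ => by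
    linarith [step l₂ h₂]
  simp only [smul_eq_mul, ← funkM_eq_sInf] at this ⊢
  linarith

lemma funkM_le_mul (hC : IsOpenCone C) (hx : x ∈ C) (hz : z ∈ C) (y : V) :
    funkM C y z ≤ funkM C y x * funkM C x z := by
  have key : ∀ l ∈ funkSet C y x, ∀ m ∈ funkSet C x z, funkM C y z ≤ m * l := fun l hl m hm => by
    refine funkM_le_of_mem ⟨mul_pos hm.1 hl.1, ?_⟩
    rw [show (m * l) • z - y = l • (m • z - x) + (l • x - y) by module]
    exact hC.add_mem_closure_s17 (hC.smul_mem_closure_s17 hl.1 hm.2) hl.2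
  exact Real.le_mul_sInf (funkSet_nonempty hC hz x) funkM_nonneg fun m hm =>
    mul_comm m (funkM C y x) ▸ Real.le_mul_sInf (funkSet_nonempty hC hx y) hm.1.le (key · · m hm)

lemma eventually_funkM_le (hC : IsOpenCone C) (hx : x ∈ C) {t : ℝ} (ht : 1 < t) :
    ∀ᶠ z in 𝓝 x, z ∈ C ∧ funkM C x z ≤ t ∧ funkM C z x ≤ t := by
  have hmem : C ∈ 𝓝 (t • x - x) := by
    rw [show t • x - x = (t - 1) • x by module]
    exact hC.isOpen_s17.mem_nhds (hC.smul_mem_s17 (sub_pos.2 ht) hx)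
  have h₁ : ∀ᶠ z in 𝓝 x, t • z - x ∈ C :=
    (by fun_prop : Continuous fun z : V => t • z - x).continuousAt.eventually_mem hmem
  have h₂ : ∀ᶠ z in 𝓝 x, t • x - z ∈ C :=
    (by fun_prop : Continuous fun z : V => t • x - z).continuousAt.eventually_mem hmem
  filter_upwards [hC.isOpen_s17.mem_nhds hx, h₁, h₂] with z hz hz₁ hz₂
  exact ⟨hz, funkM_le_of_mem ⟨by linarith, subset_closure hz₁⟩,
    funkM_le_of_mem ⟨by linarith, subset_closure hz₂⟩⟩

lemma continuousAt_funkM_right (hC : IsOpenCone C) (hx : x ∈ C) (y : V) :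
    ContinuousAt (funkM C y) x := by
  rw [ContinuousAt, Metric.tendsto_nhds]
  intro δ hδ
  obtain ⟨t, htδ, ht⟩ : ∃ t, (t - 1) * t * funkM C y x < δ ∧ t ∈ Ioi 1 := by
    have hlim : Tendsto (fun t : ℝ => (t - 1) * t * funkM C y x) (𝓝[>] 1) (𝓝 0) :=
      ((by fun_prop : Continuous fun t : ℝ => (t - 1) * t * funkM C y x).tendsto' 1 0
        (by simp)).mono_left nhdsWithin_le_nhds
    exact ((hlim.eventually (gt_mem_nhds hδ)).and self_mem_nhdsWithin).exists
  filter_upwards [eventually_funkM_le hC hx ht] with z ⟨hz, hxz, hzx⟩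
  -- `funkM C y z ≤ t * funkM C y x` and `funkM C y x ≤ t * funkM C y z`
  have hup := funkM_le_mul hC hx hz y
  have hdown := funkM_le_mul hC hz hx y
  have hgx : 0 ≤ funkM C y x := funkM_nonneg
  have hgz : 0 ≤ funkM C y z := funkM_nonneg
  have ht1 : 1 < t := ht
  rw [Real.dist_eq, abs_sub_lt_iff]
  constructor <;> nlinarith [mul_le_mul_of_nonneg_left hxz hgx, mul_le_mul_of_nonneg_left hzx hgz]

lemma continuousAt_funkF (hC : IsOpenCone C) (hlines : ∀ v, v ∈ closure C → -v ∈ closure C → v = 0)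
    (hy : y ∈ C) (hx : x ∈ C) : ContinuousAt (funkF C y) x :=
  (continuousAt_funkM_right hC hx y).log
    (funkM_pos hC hlines (subset_closure hy) (ne_of_mem_of_not_mem hy hC.zero_notMem_s17) hx).ne'

end

lemma continuous_funkM_left (hC : IsOpenCone C) (hx : x ∈ C) : Continuous fun y => funkM C y x :=
  continuousOn_univ.1 ((funkM_convexOn_left hC hx).continuousOn isOpen_univ)

lemma continuousAt_revF (hC : IsOpenCone C) (hlines : ∀ v, v ∈ closure C → -v ∈ closure C → v = 0)
    (hy : y ∈ C) (hx : x ∈ closure C) (hx0 : x ≠ 0) : ContinuousAt (revF C y) x :=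
  (continuous_funkM_left hC hy).continuousAt.log (funkM_pos hC hlines hx hx0 hy).ne'

theorem hilbert_horofunction_splits_general (C : Set V) (hC : IsOpenCone C)
    (hlines : ∀ v, v ∈ closure C → -v ∈ closure C → v = 0)
    (ψ : V →L[ℝ] ℝ)
    (D : Set V) (hD : D = {u | u ∈ C ∧ ψ u = 1}) (hDc : IsCompact (closure D))
    (b : V) (hb : b ∈ D)
    (xs : ℕ → V) (hxs : ∀ n, xs n ∈ D) (h : V → ℝ)
    (hconv : ∀ u ∈ C, Tendsto (fun n => hilD C u (xs n) - hilD C b (xs n)) atTop (𝓝 (h u)))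
    (hhoro : ¬ ∃ p ∈ C, ∀ u ∈ C, h u = hilD C u p - hilD C b p) :
    ∃ x, x ∈ frontier C ∧ x ≠ 0 ∧ ∃ f : V → ℝ, ∃ φ : ℕ → ℕ, StrictMono φ ∧
      Tendsto (xs ∘ φ) atTop (𝓝 x) ∧
      (∀ u ∈ C, Tendsto (fun k => funkF C u (xs (φ k)) - funkF C b (xs (φ k))) atTop
          (𝓝 (f u))) ∧
      (∀ u ∈ C, h u = (revF C u x - revF C b x) + f u) := by
  subst hD
  obtain ⟨x, hxD, φ, hφ, hlim⟩ := hDc.tendsto_subseq fun n => subset_closure (hxs n)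
  have hxC : x ∈ closure C := closure_mono (fun _ hu => hu.1) hxD
  have hx0 : x ≠ 0 := by
    have : ψ x = 1 := closure_minimal (fun _ hu => hu.2)
      (isClosed_eq ψ.continuous continuous_const) hxD
    rintro rfl
    simp at this
  have hbC : b ∈ C := hb.1
  have hfunk : ∀ u ∈ C, Tendsto (fun k => funkF C u (xs (φ k)) - funkF C b (xs (φ k))) atTop
      (𝓝 (h u - (revF C u x - revF C b x))) := fun u hu => by
    have hrev := ((continuousAt_revF hC hlines hu hxC hx0).tendsto.comp hlim).sub
      ((continuousAt_revF hC hlines hbC hxC hx0).tendsto.comp hlim)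
    refine (((hconv u hu).comp hφ.tendsto_atTop).sub hrev).congr fun k => ?_
    simp only [Function.comp, hilD]
    ring
  have hxnC : x ∉ C := fun hx => hhoro ⟨x, hx, fun u hu => by
    have hF := ((continuousAt_funkF hC hlines hu hx).tendsto.comp hlim).sub
      ((continuousAt_funkF hC hlines hbC hx).tendsto.comp hlim)
    have := tendsto_nhds_unique (hfunk u hu) hF
    simp only [hilD]
    linarith⟩
  exact ⟨x, hC.isOpen_s17.frontier_eq ▸ ⟨hxC, hxnC⟩, hx0, _, φ, hφ, hlim, hfunk, fun u _ => by ring⟩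

/-- every Hilbert-geometry horofunction splits as the sum of a reverse-Funk
horofunction `ψ_x` and a Funk limit `f` along a subsequence converging to `x ∈ ∂C∖{0}`. -/
theorem hilbert_horofunction_splits (C : Set V) (hC : IsOpenCone C)
    (hlines : ∀ v, v ∈ closure C → -v ∈ closure C → v = 0)
    (ψ : V →L[ℝ] ℝ) (hψ : ∀ u ∈ closure C, u ≠ 0 → 0 < ψ u)
    (D : Set V) (hD : D = {u | u ∈ C ∧ ψ u = 1}) (hDc : IsCompact (closure D))
    (b : V) (hb : b ∈ D)
    (xs : ℕ → V) (hxs : ∀ n, xs n ∈ D) (h : V → ℝ)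
    (hconv : ∀ u ∈ C, Tendsto (fun n => hilD C u (xs n) - hilD C b (xs n)) atTop (𝓝 (h u)))
    (hhoro : ¬ ∃ p ∈ C, ∀ u ∈ C, h u = hilD C u p - hilD C b p) :
    ∃ x, x ∈ frontier C ∧ x ≠ 0 ∧ ∃ f : V → ℝ, ∃ φ : ℕ → ℕ, StrictMono φ ∧
      Tendsto (xs ∘ φ) atTop (𝓝 x) ∧
      (∀ u ∈ C, Tendsto (fun k => funkF C u (xs (φ k)) - funkF C b (xs (φ k))) atTop
          (𝓝 (f u))) ∧
      (∀ u ∈ C, h u = (revF C u x - revF C b x) + f u) :=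
  hilbert_horofunction_splits_general C hC hlines ψ D hD hDc b hb xs hxs h hconv hhoro
end

section
/- Let D be a bounded open convex subset of ℝᴺ. If a sequence in D converges to a point of the horofunction boundary of the Hilbert metric on D (pointwise convergence of Hil(·,x_n) − Hil(b,x_n) to a horofunction), then the sequence converges in the usual Euclidean sense to a point of the Euclidean boundary ∂D. -/
/-!
Let `p ∈ closure D` be a cluster point of the sequence. If `p ∈ D`, continuity of the Hilbert metric
gives `h = Hil(·, p) - Hil(b, p)`, which is excluded. Suppose the sequence clusters at two boundary
points `ξ` and `η`, let `u_t = (1 - t) b + t ξ`, and write `F = exp F_C` for the Funk gauge.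
Splitting `h` into a Funk and a reverse Funk part, the Funk part at `u_t` is at most `log (1 - t)`
along the terms tending to `ξ` (the Funk gauge from `ξ` is negligible near `ξ`, and the gauge is
convex in its first argument), and at least `-log F(b, u_t) ≥ log (1 - t)` along any sequence. The
reverse parts are continuous, and after swapping `ξ` and `η` so that `F(η, b) ≤ F(ξ, b)` this leaves
`F(η, u_t) ≤ 1 / t`. That puts `b + r (ξ - η)` in `closure D` for every `r > 0`, so `ξ = η` because
`D` is bounded. By compactness of `closure D`, the sequence converges.
-/

open Set Filter Topology

variable {V : Type*} [NormedAddCommGroup V] [NormedSpace ℝ V] [FiniteDimensional ℝ V]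

/-- The cone over a convex domain `D ⊂ ℝᴺ`, realizing `D` as the cross section at
height one. -/
def coneOver {n : ℕ} (D : Set (Fin n → ℝ)) : Set ((Fin n → ℝ) × ℝ) :=
  {p | 0 < p.2 ∧ p.2⁻¹ • p.1 ∈ D}

/-- The Hilbert metric on `D`, via the cone over `D`. -/
noncomputable def hilOn {n : ℕ} (D : Set (Fin n → ℝ)) (x y : Fin n → ℝ) : ℝ :=
  hilD (coneOver D) (x, (1 : ℝ)) (y, (1 : ℝ))

namespace HilbertGeometry

variable {E : Type*} [NormedAddCommGroup E] [NormedSpace ℝ E] {D : Set E} {b x y z ξ η : E}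
  {ρ : ℝ}

-- For `E = Fin n → ℝ` this is `coneOver D`, so `hilbertDist D` below is `hilOn D` by definition.
def cone (D : Set E) : Set (E × ℝ) := {p | 0 < p.2 ∧ p.2⁻¹ • p.1 ∈ D}

theorem smul_mem_cone {c : ℝ} (hc : 0 < c) {p : E × ℝ} (hp : p ∈ cone D) : c • p ∈ cone D := by
  refine ⟨mul_pos hc hp.1, ?_⟩
  convert hp.2 using 1
  simp only [Prod.smul_fst, Prod.smul_snd, smul_eq_mul, mul_inv, smul_smul]
  rw [mul_right_comm, inv_mul_cancel₀ hc.ne', one_mul]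

theorem convex_cone (hD : Convex ℝ D) : Convex ℝ (cone D) := by
  rintro ⟨p, s⟩ ⟨hs, hp⟩ ⟨q, r⟩ ⟨hr, hq⟩ a c ha hc hac
  have hpos : 0 < a * s + c * r := by
    rcases ha.eq_or_lt with rfl | ha'
    · simpa [show c = 1 by linarith] using hr
    · positivity
  refine ⟨hpos, ?_⟩
  have hcomb : (a * s + c * r)⁻¹ • (a • p + c • q)
      = (a * s / (a * s + c * r)) • (s⁻¹ • p) + (c * r / (a * s + c * r)) • (r⁻¹ • q) := by
    simp only [smul_add, smul_smul]
    congr 2 <;> field_simp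
  simp only [Prod.smul_mk, Prod.mk_add_mk, smul_eq_mul]
  rw [hcomb]
  exact hD hp hq (by positivity) (by positivity) (by field_simp)

theorem smul_mem_closure_cone {c : ℝ} (hc : 0 < c) {p : E × ℝ} (hp : p ∈ closure (cone D)) :
    c • p ∈ closure (cone D) :=
  map_mem_closure (continuous_const_smul c) hp fun _ hq => smul_mem_cone hc hq

theorem add_mem_closure_cone (hD : Convex ℝ D) {p q : E × ℝ} (hp : p ∈ closure (cone D))
    (hq : q ∈ closure (cone D)) : p + q ∈ closure (cone D) := by
  have hmid := (convex_cone hD).closure hp hq (by norm_num : (0 : ℝ) ≤ 1 / 2)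
    (by norm_num : (0 : ℝ) ≤ 1 / 2) (by norm_num)
  convert smul_mem_closure_cone two_pos hmid using 1
  module

theorem mk_mem_closure_cone {y : E} (hy : y ∈ closure D) {s : ℝ} (hs : 0 < s) :
    (s • y, s) ∈ closure (cone D) :=
  map_mem_closure (f := fun z : E => (s • z, s)) (by fun_prop) hy fun z hz =>
    ⟨hs, by simpa [smul_smul, inv_mul_cancel₀ hs.ne'] using hz⟩

theorem snd_nonneg_of_mem_closure_cone {p : E × ℝ} (hp : p ∈ closure (cone D)) : 0 ≤ p.2 :=
  closure_minimal (fun _ hq => hq.1.le) (isClosed_le continuous_const continuous_snd) hp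

theorem inv_smul_mem_closure_of_mem_closure_cone {p : E × ℝ} (hp : p ∈ closure (cone D))
    (hs : 0 < p.2) : p.2⁻¹ • p.1 ∈ closure D :=
  ContinuousWithinAt.mem_closure (f := fun q : E × ℝ => q.2⁻¹ • q.1)
    ((continuousAt_snd.inv₀ hs.ne').smul continuousAt_fst).continuousWithinAt hp fun _ hq => hq.2

theorem fst_eq_zero_of_mem_closure_cone (hDb : Bornology.IsBounded D) {p : E × ℝ}
    (hp : p ∈ closure (cone D)) (hs : p.2 = 0) : p.1 = 0 := by
  obtain ⟨M, hM⟩ := hDb.exists_norm_le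
  have hcone : cone D ⊆ {q : E × ℝ | ‖q.1‖ ≤ M * q.2} := by
    rintro ⟨v, s⟩ ⟨hs, hv⟩
    calc ‖v‖ = s * ‖s⁻¹ • v‖ := by
          rw [norm_smul, Real.norm_eq_abs, abs_inv, abs_of_pos hs, mul_inv_cancel_left₀ hs.ne']
      _ ≤ s * M := by gcongr; exact hM _ hv
      _ = M * s := mul_comm _ _
  have hp' := closure_minimal hcone
    (isClosed_le (continuous_norm.comp continuous_fst) (continuous_const.mul continuous_snd)) hp
  simpa [hs] using hp'

section Gauge

variable {l : ℝ}

def funkGaugeSet (D : Set E) (x y : E) : Set ℝ :=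
  {l | 0 < l ∧ l • ((y, 1) : E × ℝ) - (x, 1) ∈ closure (cone D)}

noncomputable def funkGauge (D : Set E) (x y : E) : ℝ := funkM (cone D) (x, 1) (y, 1)

noncomputable def hilbertDist (D : Set E) (x y : E) : ℝ := hilD (cone D) (x, 1) (y, 1)

theorem funkGauge_eq_sInf : funkGauge D x y = sInf (funkGaugeSet D x y) := rfl

theorem hilbertDist_eq :
    hilbertDist D x y = Real.log (funkGauge D x y) + Real.log (funkGauge D y x) := rfl

theorem mem_funkGaugeSet_iff :
    l ∈ funkGaugeSet D x y ↔ 0 < l ∧ (l • y - x, l - 1) ∈ closure (cone D) := by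
  simp [funkGaugeSet]

theorem one_le_of_mem_funkGaugeSet (hl : l ∈ funkGaugeSet D x y) : 1 ≤ l :=
  sub_nonneg.1 (snd_nonneg_of_mem_closure_cone (mem_funkGaugeSet_iff.1 hl).2)

theorem mem_funkGaugeSet_iff_of_one_lt (hl : 1 < l) :
    l ∈ funkGaugeSet D x y ↔ y + (l - 1)⁻¹ • (y - x) ∈ closure D := by
  have hl' : 0 < l - 1 := sub_pos.2 hl
  have hpt : (l - 1)⁻¹ • (l • y - x) = y + (l - 1)⁻¹ • (y - x) := by
    rw [show l • y - x = (l - 1) • y + (y - x) by module, smul_add, inv_smul_smul₀ hl'.ne']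
  rw [mem_funkGaugeSet_iff, ← hpt]
  refine ⟨fun h => inv_smul_mem_closure_of_mem_closure_cone h.2 hl', fun h => ⟨by linarith, ?_⟩⟩
  simpa [smul_inv_smul₀ hl'.ne'] using mk_mem_closure_cone h hl'

theorem isClosed_funkGaugeSet : IsClosed (funkGaugeSet D x y) := by
  have hset : funkGaugeSet D x y
      = Ici 1 ∩ (fun l : ℝ => l • ((y, 1) : E × ℝ) - (x, 1)) ⁻¹' closure (cone D) := by
    ext l
    exact ⟨fun hl => ⟨one_le_of_mem_funkGaugeSet hl, hl.2⟩,
      fun hl => ⟨one_pos.trans_le hl.1, hl.2⟩⟩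
  rw [hset]
  exact isClosed_Ici.inter (isClosed_closure.preimage (by fun_prop))

theorem funkGauge_le (hl : l ∈ funkGaugeSet D x y) : funkGauge D x y ≤ l :=
  funkGauge_eq_sInf (D := D) ▸ csInf_le ⟨1, fun _ => one_le_of_mem_funkGaugeSet⟩ hl

theorem mem_funkGaugeSet_of_ball_subset {ε : ℝ} (hε : 0 < ε) (hball : Metric.ball y ε ⊆ D)
    (hl : 1 + ‖y - x‖ / ε < l) : l ∈ funkGaugeSet D x y := by
  have hl' : ‖y - x‖ / ε < l - 1 := by linarith
  have hpos : 0 < l - 1 := (div_nonneg (norm_nonneg _) hε.le).trans_lt hl'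
  refine (mem_funkGaugeSet_iff_of_one_lt (by linarith)).2 (subset_closure (hball ?_))
  rw [Metric.mem_ball, dist_eq_norm, add_sub_cancel_left, norm_smul, Real.norm_eq_abs,
    abs_inv, abs_of_pos hpos, inv_mul_lt_iff₀ hpos]
  rwa [div_lt_iff₀ hε] at hl'

theorem funkGauge_le_one_add_div {ε : ℝ} (hε : 0 < ε) (hball : Metric.ball y ε ⊆ D) :
    funkGauge D x y ≤ 1 + ‖y - x‖ / ε :=
  le_of_forall_gt_imp_ge_of_dense fun _ hl =>
    funkGauge_le (mem_funkGaugeSet_of_ball_subset hε hball hl)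

theorem funkGaugeSet_nonempty (hDo : IsOpen D) (hy : y ∈ D) : (funkGaugeSet D x y).Nonempty := by
  obtain ⟨ε, hε, hball⟩ := Metric.isOpen_iff.1 hDo y hy
  exact ⟨_, mem_funkGaugeSet_of_ball_subset hε hball (lt_add_one _)⟩

theorem funkGauge_mem (hDo : IsOpen D) (hy : y ∈ D) : funkGauge D x y ∈ funkGaugeSet D x y :=
  funkGauge_eq_sInf (D := D) ▸ isClosed_funkGaugeSet.csInf_mem (funkGaugeSet_nonempty hDo hy)
    ⟨1, fun _ => one_le_of_mem_funkGaugeSet⟩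

theorem one_le_funkGauge (hDo : IsOpen D) (hy : y ∈ D) : 1 ≤ funkGauge D x y :=
  one_le_of_mem_funkGaugeSet (funkGauge_mem hDo hy)

theorem funkGauge_pos (hDo : IsOpen D) (hy : y ∈ D) : 0 < funkGauge D x y :=
  one_pos.trans_le (one_le_funkGauge hDo hy)

theorem funkGauge_self (hDo : IsOpen D) (hy : y ∈ D) : funkGauge D y y = 1 := by
  obtain ⟨ε, hε, hball⟩ := Metric.isOpen_iff.1 hDo y hy
  refine le_antisymm ?_ (one_le_funkGauge hDo hy)
  simpa using funkGauge_le_one_add_div (x := y) hε hball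

theorem mem_funkGaugeSet_of_funkGauge_le (hD : Convex ℝ D) (hDo : IsOpen D) (hy : y ∈ D)
    (hl : funkGauge D x y ≤ l) : l ∈ funkGaugeSet D x y := by
  rcases hl.eq_or_lt with rfl | hlt
  · exact funkGauge_mem hDo hy
  obtain ⟨hpos, hmem⟩ := mem_funkGaugeSet_iff.1 (funkGauge_mem (x := x) hDo hy)
  refine mem_funkGaugeSet_iff.2 ⟨hpos.trans hlt, ?_⟩
  convert add_mem_closure_cone hD hmem
    (mk_mem_closure_cone (subset_closure hy) (sub_pos.2 hlt)) using 1
  ext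
  · simp only [Prod.fst_add]
    module
  · simp only [Prod.snd_add]
    ring

theorem mul_mem_funkGaugeSet (hD : Convex ℝ D) {l l' : ℝ} (hl : l ∈ funkGaugeSet D x y)
    (hl' : l' ∈ funkGaugeSet D y z) : l * l' ∈ funkGaugeSet D x z := by
  refine ⟨mul_pos hl.1 hl'.1, ?_⟩
  have hsplit : (l * l') • ((z, 1) : E × ℝ) - (x, 1)
      = l • (l' • ((z, 1) : E × ℝ) - (y, 1)) + (l • ((y, 1) : E × ℝ) - (x, 1)) := by
    module
  rw [hsplit]
  exact add_mem_closure_cone hD (smul_mem_closure_cone hl.1 hl'.2) hl.2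

theorem funkGauge_le_mul (hD : Convex ℝ D) (hDo : IsOpen D) (hy : y ∈ D) (hz : z ∈ D) :
    funkGauge D x z ≤ funkGauge D x y * funkGauge D y z :=
  funkGauge_le (mul_mem_funkGaugeSet hD (funkGauge_mem hDo hy) (funkGauge_mem hDo hz))

theorem log_funkGauge_le_add (hD : Convex ℝ D) (hDo : IsOpen D) (hy : y ∈ D) (hz : z ∈ D) :
    Real.log (funkGauge D x z) ≤ Real.log (funkGauge D x y) + Real.log (funkGauge D y z) := by
  rw [← Real.log_mul (funkGauge_pos hDo hy).ne' (funkGauge_pos hDo hz).ne']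
  exact Real.log_le_log (funkGauge_pos hDo hz) (funkGauge_le_mul hD hDo hy hz)

theorem convexOn_funkGauge_fst (hD : Convex ℝ D) (hDo : IsOpen D) (hz : z ∈ D) :
    ConvexOn ℝ univ (funkGauge D · z) := by
  refine ⟨convex_univ, fun x _ x' _ a c ha hc hac => funkGauge_le ⟨?_, ?_⟩⟩
  · simp only [smul_eq_mul]
    nlinarith [one_le_funkGauge (x := x) hDo hz, one_le_funkGauge (x := x') hDo hz]
  have hsplit : (a • funkGauge D x z + c • funkGauge D x' z) • ((z, 1) : E × ℝ)
        - (a • x + c • x', 1)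
      = a • (funkGauge D x z • ((z, 1) : E × ℝ) - (x, 1))
        + c • (funkGauge D x' z • ((z, 1) : E × ℝ) - (x', 1)) := by
    ext
    · simp only [smul_eq_mul, Prod.fst_sub, Prod.smul_fst, Prod.fst_add]
      module
    · simp only [smul_eq_mul, Prod.snd_sub, Prod.smul_snd, Prod.snd_add]
      linear_combination hac
  rw [hsplit]
  exact (convex_cone hD).closure (funkGauge_mem hDo hz).2 (funkGauge_mem hDo hz).2 ha hc hac

theorem log_funkGauge_combo_sub_le (hD : Convex ℝ D) (hDo : IsOpen D) (hx : x ∈ D) {t : ℝ}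
    (ht0 : 0 < t) (ht1 : t < 1) :
    Real.log (funkGauge D ((1 - t) • b + t • ξ) x) - Real.log (funkGauge D b x)
      ≤ Real.log ((1 - t) + t * (funkGauge D ξ x / funkGauge D b x)) := by
  have hb_pos := funkGauge_pos (x := b) hDo hx
  have hconvex := (convexOn_funkGauge_fst hD hDo hx).2 (mem_univ b) (mem_univ ξ)
    (sub_pos.2 ht1).le ht0.le (sub_add_cancel 1 t)
  have hsplit : (1 - t) • funkGauge D b x + t • funkGauge D ξ x
      = funkGauge D b x * ((1 - t) + t * (funkGauge D ξ x / funkGauge D b x)) := by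
    simp only [smul_eq_mul]
    field_simp
  rw [hsplit] at hconvex
  have hfactor : 0 < (1 - t) + t * (funkGauge D ξ x / funkGauge D b x) := by
    have := div_pos (funkGauge_pos (x := ξ) hDo hx) hb_pos
    nlinarith
  rw [sub_le_iff_le_add', ← Real.log_mul hb_pos.ne' hfactor.ne']
  exact Real.log_le_log (funkGauge_pos hDo hx) hconvex

/-- A convex function that is bounded above near one point is continuous. -/
theorem continuous_funkGauge_fst (hD : Convex ℝ D) (hDo : IsOpen D) (hz : z ∈ D) :
    Continuous (funkGauge D · z) := by
  obtain ⟨ε, hε, hball⟩ := Metric.isOpen_iff.1 hDo z hz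
  have hbdd : (𝓝 z).IsBoundedUnder (· ≤ ·) (funkGauge D · z) := by
    refine isBoundedUnder_of_eventually_le (a := 1 + 1 / ε) ?_
    filter_upwards [Metric.ball_mem_nhds z one_pos] with x hx
    refine (funkGauge_le_one_add_div hε hball).trans ?_
    rw [Metric.mem_ball, dist_eq_norm] at hx
    gcongr
    rw [norm_sub_rev]
    exact hx.le
  rw [← continuousOn_univ]
  have hiff := ((convexOn_funkGauge_fst hD hDo hz).continuousOn_tfae isOpen_univ
    univ_nonempty).out 3 1
  exact hiff.1 ⟨z, mem_univ z, hbdd⟩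

theorem tendsto_funkGauge_self (hDo : IsOpen D) (hy : y ∈ D) :
    Tendsto (funkGauge D y) (𝓝 y) (𝓝 1) := by
  obtain ⟨ε, hε, hball⟩ := Metric.isOpen_iff.1 hDo y hy
  have hupper : ∀ᶠ x in 𝓝 y, funkGauge D y x ≤ 1 + ‖x - y‖ / (ε - ‖x - y‖) := by
    filter_upwards [Metric.ball_mem_nhds y hε] with x hx
    rw [Metric.mem_ball, dist_eq_norm] at hx
    exact funkGauge_le_one_add_div (sub_pos.2 hx)
      ((Metric.ball_subset_ball' (by rw [dist_eq_norm]; linarith)).trans hball)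
  have hlower : ∀ᶠ x in 𝓝 y, 1 ≤ funkGauge D y x := by
    filter_upwards [hDo.mem_nhds hy] with x hx using one_le_funkGauge hDo hx
  have hlim : Tendsto (fun x => 1 + ‖x - y‖ / (ε - ‖x - y‖)) (𝓝 y) (𝓝 1) := by
    have hcont : ContinuousAt (fun x => 1 + ‖x - y‖ / (ε - ‖x - y‖)) y := by
      fun_prop (disch := simp [hε.ne'])
    simpa using hcont.tendsto
  exact tendsto_of_tendsto_of_tendsto_of_le_of_le' tendsto_const_nhds hlim hlower hupper

theorem continuousAt_funkGauge_snd (hD : Convex ℝ D) (hDo : IsOpen D) (hy : y ∈ D) :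
    ContinuousAt (funkGauge D x) y := by
  have hself : Tendsto (fun z => funkGauge D z y) (𝓝 y) (𝓝 1) := by
    simpa [funkGauge_self hDo hy] using (continuous_funkGauge_fst hD hDo hy).tendsto y
  have hlower : Tendsto (fun z => funkGauge D x y / funkGauge D z y) (𝓝 y)
      (𝓝 (funkGauge D x y)) := by
    have h := (tendsto_const_nhds (x := funkGauge D x y)).div hself one_ne_zero
    rwa [div_one] at h
  have hupper : Tendsto (fun z => funkGauge D x y * funkGauge D y z) (𝓝 y)
      (𝓝 (funkGauge D x y)) := by
    have h := (tendsto_const_nhds (x := funkGauge D x y)).mul (tendsto_funkGauge_self hDo hy)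
    rwa [mul_one] at h
  refine tendsto_of_tendsto_of_tendsto_of_le_of_le' hlower hupper ?_ ?_ <;>
    filter_upwards [hDo.mem_nhds hy] with z hz
  · rw [div_le_iff₀ (funkGauge_pos hDo hy)]
    exact funkGauge_le_mul hD hDo hz hy
  · exact funkGauge_le_mul hD hDo hy hz

theorem continuousAt_hilbertDist (hD : Convex ℝ D) (hDo : IsOpen D) (hx : x ∈ D) (hy : y ∈ D) :
    ContinuousAt (hilbertDist D x) y := by
  show ContinuousAt (fun z => Real.log (funkGauge D x z) + Real.log (funkGauge D z x)) y
  exact ((continuousAt_funkGauge_snd hD hDo hy).log (funkGauge_pos hDo hy).ne').add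
    ((continuous_funkGauge_fst hD hDo hx).continuousAt.log (funkGauge_pos hDo hx).ne')

end Gauge

/-- Membership of `l` writes `x = l⁻¹ • b + (1 - l⁻¹) • w` with `w ∈ closure D`, so the ball of
radius `ρ` around `b` is shrunk by the factor `l⁻¹` around `x`. -/
theorem ball_subset_of_mem_funkGaugeSet (hD : Convex ℝ D) (hDb : Bornology.IsBounded D)
    (hball : Metric.ball b ρ ⊆ D) {l : ℝ} (hl : l ∈ funkGaugeSet D b x) :
    Metric.ball x (ρ / l) ⊆ D := by
  rcases (one_le_of_mem_funkGaugeSet hl).eq_or_lt with rfl | hl1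
  · have hx : x - b = 0 := by
      simpa using fst_eq_zero_of_mem_closure_cone hDb (mem_funkGaugeSet_iff.1 hl).2 (sub_self 1)
    rwa [sub_eq_zero.1 hx, div_one]
  have hl0 : 0 < l := one_pos.trans hl1
  have hw := (mem_funkGaugeSet_iff_of_one_lt hl1).1 hl
  intro v hv
  have hv' : b + l • (v - x) ∈ interior D := by
    refine interior_maximal hball Metric.isOpen_ball ?_
    rw [Metric.mem_ball, dist_eq_norm, add_sub_cancel_left, norm_smul, Real.norm_eq_abs,
      abs_of_pos hl0, ← lt_div_iff₀' hl0, ← dist_eq_norm]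
    exact hv
  have hcomb : v = l⁻¹ • (b + l • (v - x)) + (1 - l⁻¹) • (x + (l - 1)⁻¹ • (x - b)) := by
    have hl1' : l - 1 ≠ 0 := (sub_pos.2 hl1).ne'
    rw [smul_add, smul_add, inv_smul_smul₀ hl0.ne', smul_smul,
      show (1 - l⁻¹) * (l - 1)⁻¹ = l⁻¹ by field_simp]
    module
  rw [hcomb]
  exact interior_subset (hD.combo_interior_closure_mem_interior hv' hw (inv_pos.2 hl0)
    (sub_nonneg.2 (inv_le_one_of_one_le₀ hl1.le)) (add_sub_cancel _ _))

theorem le_norm_mul_funkGauge (hD : Convex ℝ D) (hDo : IsOpen D) (hDb : Bornology.IsBounded D)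
    (hball : Metric.ball b ρ ⊆ D) (hx : x ∈ D) (hξ : ξ ∉ D) : ρ ≤ ‖x - ξ‖ * funkGauge D b x := by
  have hsub := ball_subset_of_mem_funkGaugeSet hD hDb hball (funkGauge_mem hDo hx)
  have hfar : ρ / funkGauge D b x ≤ ‖x - ξ‖ := by
    rw [← dist_eq_norm, dist_comm]
    exact not_lt.1 fun h => hξ (hsub h)
  rwa [div_le_iff₀ (funkGauge_pos hDo hx)] at hfar

theorem funkGauge_le_one_add_norm_mul (hD : Convex ℝ D) (hDo : IsOpen D)
    (hDb : Bornology.IsBounded D) (hρ : 0 < ρ) (hball : Metric.ball b ρ ⊆ D) (hx : x ∈ D) (ξ : E) :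
    funkGauge D ξ x ≤ 1 + ‖x - ξ‖ * funkGauge D b x / ρ := by
  have hpos := funkGauge_pos (x := b) hDo hx
  have h := funkGauge_le_one_add_div (x := ξ) (div_pos hρ hpos)
    (ball_subset_of_mem_funkGaugeSet hD hDb hball (funkGauge_mem hDo hx))
  rwa [div_div_eq_mul_div] at h

theorem tendsto_funkGauge_div_funkGauge (hD : Convex ℝ D) (hDo : IsOpen D)
    (hDb : Bornology.IsBounded D) (hb : b ∈ D) (hξ : ξ ∉ D) :
    Tendsto (fun x => funkGauge D ξ x / funkGauge D b x) (𝓝[D] ξ) (𝓝 0) := by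
  obtain ⟨ρ, hρ, hball⟩ := Metric.isOpen_iff.1 hDo b hb
  have hbound : ∀ x ∈ D, funkGauge D ξ x / funkGauge D b x ≤ 2 / ρ * ‖x - ξ‖ := by
    intro x hx
    have hpos := funkGauge_pos (x := b) hDo hx
    have h1 := funkGauge_le_one_add_norm_mul hD hDo hDb hρ hball hx ξ
    have h2 := le_norm_mul_funkGauge hD hDo hDb hball hx hξ
    rw [div_le_iff₀ hpos]
    calc funkGauge D ξ x ≤ 1 + ‖x - ξ‖ * funkGauge D b x / ρ := h1
      _ ≤ 2 * (‖x - ξ‖ * funkGauge D b x) / ρ := by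
        rw [le_div_iff₀ hρ, add_mul, one_mul, div_mul_cancel₀ _ hρ.ne']
        linarith
      _ = 2 / ρ * ‖x - ξ‖ * funkGauge D b x := by ring
  have hlim : Tendsto (fun x => 2 / ρ * ‖x - ξ‖) (𝓝[D] ξ) (𝓝 0) := by
    have hcont : Continuous fun x => 2 / ρ * ‖x - ξ‖ := by fun_prop
    simpa using (hcont.tendsto ξ).mono_left nhdsWithin_le_nhds
  refine squeeze_zero' ?_ (eventually_nhdsWithin_of_forall hbound) hlim
  exact eventually_nhdsWithin_of_forall fun x hx =>
    div_nonneg (funkGauge_pos hDo hx).le (funkGauge_pos hDo hx).le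

theorem funkGauge_combo_le (hw : ξ ∈ closure D) {a c : ℝ} (ha : 0 < a) (hc : 0 < c)
    (hac : a + c = 1) : funkGauge D x (a • x + c • ξ) ≤ a⁻¹ := by
  refine funkGauge_le ((mem_funkGaugeSet_iff_of_one_lt (one_lt_inv₀ ha |>.2 (by linarith))).2 ?_)
  have hgap : a⁻¹ - 1 = c / a := by field_simp; linarith
  have hdiff : a • x + c • ξ - x = c • (ξ - x) := by linear_combination (norm := module) hac • x
  rw [hgap, hdiff, inv_div, smul_smul, div_mul_cancel₀ _ hc.ne']
  convert hw using 1
  linear_combination (norm := module) hac • ξ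

theorem combo_mem_of_mem_closure (hD : Convex ℝ D) (hDo : IsOpen D) (hb : b ∈ D)
    (hξ : ξ ∈ closure D) {a c : ℝ} (ha : 0 < a) (hc : 0 ≤ c) (hac : a + c = 1) :
    a • b + c • ξ ∈ D := by
  rw [← hDo.interior_eq] at hb ⊢
  exact hD.combo_interior_closure_mem_interior hb hξ ha hc hac

theorem eq_zero_of_forall_add_smul_mem {s : Set E} (hs : Bornology.IsBounded s) {v : E}
    (hray : ∀ r : ℝ, 0 < r → b + r • v ∈ s) : v = 0 := by
  obtain ⟨M, hM⟩ := hs.exists_norm_le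
  by_contra hv
  have hv' : 0 < ‖v‖ := norm_pos_iff.2 hv
  have hM0 : 0 ≤ M := (norm_nonneg _).trans (hM _ (hray 1 one_pos))
  set r := (M + ‖b‖ + 1) / ‖v‖
  have hr : 0 < r := by positivity
  have hfar : ‖r • v‖ = M + ‖b‖ + 1 := by
    rw [norm_smul, Real.norm_eq_abs, abs_of_pos hr, div_mul_cancel₀ _ hv'.ne']
  have hnear : ‖r • v‖ ≤ M + ‖b‖ :=
    calc ‖r • v‖ = ‖(b + r • v) - b‖ := by rw [add_sub_cancel_left]
      _ ≤ ‖b + r • v‖ + ‖b‖ := norm_sub_le _ _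
      _ ≤ M + ‖b‖ := by gcongr; exact hM _ (hray r hr)
  linarith

/-- At `t = r / (1 + r)` the hypothesis puts `b + r • (ξ - η)` in `closure D`. -/
theorem eq_of_forall_funkGauge_le_inv (hD : Convex ℝ D) (hDo : IsOpen D)
    (hDb : Bornology.IsBounded D) (hb : b ∈ D) (hξ : ξ ∈ closure D) {η : E}
    (hle : ∀ t ∈ Ioo (0 : ℝ) 1, funkGauge D η ((1 - t) • b + t • ξ) ≤ t⁻¹) : ξ = η := by
  refine sub_eq_zero.1 (eq_zero_of_forall_add_smul_mem (b := b) hDb.closure fun r hr => ?_)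
  set t := r / (1 + r)
  have ht0 : 0 < t := by positivity
  have ht1 : t < 1 := by rw [div_lt_one (by positivity)]; linarith
  have hu := combo_mem_of_mem_closure hD hDo hb hξ (sub_pos.2 ht1) ht0.le (sub_add_cancel 1 t)
  have hmem := mem_funkGaugeSet_of_funkGauge_le hD hDo hu (hle t ⟨ht0, ht1⟩)
  rw [mem_funkGaugeSet_iff_of_one_lt ((one_lt_inv₀ ht0).2 ht1)] at hmem
  have ht : t * (1 + r) = r := div_mul_cancel₀ _ (by positivity)
  have hgap : (t⁻¹ - 1)⁻¹ = r := by
    rw [show t⁻¹ - 1 = r⁻¹ by field_simp; linarith, inv_inv]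
  rw [hgap] at hmem
  convert hmem using 1
  linear_combination (norm := module) ht • (b - ξ)

section Horofunction

variable {ι : Type*} {ys : ι → E} {l l₁ l₂ : Filter ι} {h : E → ℝ}

def TendstoHorofunction (D : Set E) (b : E) (ys : ι → E) (l : Filter ι) (h : E → ℝ) : Prop :=
  ∀ u ∈ D, Tendsto (fun i => hilbertDist D u (ys i) - hilbertDist D b (ys i)) l (𝓝 (h u))

namespace TendstoHorofunction

theorem mono (H : TendstoHorofunction D b ys l h) (hl : l₁ ≤ l) :
    TendstoHorofunction D b ys l₁ h :=
  fun u hu => (H u hu).mono_left hl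

theorem eq_sub_of_tendsto_mem (H : TendstoHorofunction D b ys l h) [l.NeBot] (hD : Convex ℝ D)
    (hDo : IsOpen D) (hb : b ∈ D) {p : E} (hp : p ∈ D) (hys : Tendsto ys l (𝓝 p)) :
    ∀ u ∈ D, h u = hilbertDist D u p - hilbertDist D b p := fun u hu =>
  tendsto_nhds_unique (H u hu) ((continuousAt_hilbertDist hD hDo hu hp).tendsto.comp hys |>.sub
    ((continuousAt_hilbertDist hD hDo hb hp).tendsto.comp hys))

theorem tendsto_log_funkGauge_sub (H : TendstoHorofunction D b ys l h) (hD : Convex ℝ D)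
    (hDo : IsOpen D) (hb : b ∈ D) {u : E} (hu : u ∈ D) (hys : Tendsto ys l (𝓝 ξ)) :
    Tendsto (fun i => Real.log (funkGauge D u (ys i)) - Real.log (funkGauge D b (ys i))) l
      (𝓝 (h u - (Real.log (funkGauge D ξ u) - Real.log (funkGauge D ξ b)))) := by
  have hrev (v : E) (hv : v ∈ D) :
      Tendsto (fun i => Real.log (funkGauge D (ys i) v)) l (𝓝 (Real.log (funkGauge D ξ v))) :=
    ((continuous_funkGauge_fst hD hDo hv).tendsto ξ |>.comp hys).log (funkGauge_pos hDo hv).ne'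
  refine ((H u hu).sub ((hrev u hu).sub (hrev b hb))).congr fun i => ?_
  simp only [hilbertDist_eq]
  ring

theorem log_funkGauge_sub_le (H : TendstoHorofunction D b ys l h) [l.NeBot] (hD : Convex ℝ D)
    (hDo : IsOpen D) (hb : b ∈ D) (hys_mem : ∀ i, ys i ∈ D) (hys : Tendsto ys l (𝓝 η))
    {u : E} (hu : u ∈ D) :
    Real.log (funkGauge D η u) - Real.log (funkGauge D η b) - Real.log (funkGauge D b u) ≤ h u := by
  have hfunk := H.tendsto_log_funkGauge_sub hD hDo hb hu hys
  have hlower : -Real.log (funkGauge D b u)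
      ≤ h u - (Real.log (funkGauge D η u) - Real.log (funkGauge D η b)) :=
    ge_of_tendsto' hfunk fun i => by linarith [log_funkGauge_le_add (x := b) hD hDo hu (hys_mem i)]
  linarith

theorem le_log_one_sub (H : TendstoHorofunction D b ys l h) [l.NeBot] (hD : Convex ℝ D)
    (hDo : IsOpen D) (hDb : Bornology.IsBounded D) (hb : b ∈ D) (hys_mem : ∀ i, ys i ∈ D)
    (hys : Tendsto ys l (𝓝 ξ)) (hξ : ξ ∉ D) {t : ℝ} (ht0 : 0 < t) (ht1 : t < 1) :
    h ((1 - t) • b + t • ξ) ≤ Real.log (1 - t)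
      + (Real.log (funkGauge D ξ ((1 - t) • b + t • ξ)) - Real.log (funkGauge D ξ b)) := by
  set u := (1 - t) • b + t • ξ
  have hξcl : ξ ∈ closure D := mem_closure_of_tendsto hys (Eventually.of_forall hys_mem)
  have hu : u ∈ D := combo_mem_of_mem_closure hD hDo hb hξcl (sub_pos.2 ht1) ht0.le (by ring)
  have hratio : Tendsto (fun i => funkGauge D ξ (ys i) / funkGauge D b (ys i)) l (𝓝 0) :=
    (tendsto_funkGauge_div_funkGauge hD hDo hDb hb hξ).comp
      (tendsto_nhdsWithin_iff.2 ⟨hys, Eventually.of_forall hys_mem⟩)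
  have hbound : Tendsto
      (fun i => Real.log ((1 - t) + t * (funkGauge D ξ (ys i) / funkGauge D b (ys i)))) l
      (𝓝 (Real.log (1 - t))) := by
    simpa using ((hratio.const_mul t).const_add (1 - t)).log (by simp; linarith)
  linarith [le_of_tendsto_of_tendsto' (H.tendsto_log_funkGauge_sub hD hDo hb hu hys) hbound
    fun i => log_funkGauge_combo_sub_le hD hDo (hys_mem i) ht0 ht1]

theorem funkGauge_le_inv (H₁ : TendstoHorofunction D b ys l₁ h)
    (H₂ : TendstoHorofunction D b ys l₂ h) [l₁.NeBot] [l₂.NeBot] (hD : Convex ℝ D)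
    (hDo : IsOpen D) (hDb : Bornology.IsBounded D) (hb : b ∈ D) (hys_mem : ∀ i, ys i ∈ D)
    (hξ : Tendsto ys l₁ (𝓝 ξ)) (hξD : ξ ∉ D) (hη : Tendsto ys l₂ (𝓝 η))
    (hle : funkGauge D η b ≤ funkGauge D ξ b) {t : ℝ} (ht0 : 0 < t) (ht1 : t < 1) :
    funkGauge D η ((1 - t) • b + t • ξ) ≤ t⁻¹ := by
  set u := (1 - t) • b + t • ξ
  have hξcl : ξ ∈ closure D := mem_closure_of_tendsto hξ (Eventually.of_forall hys_mem)
  have hu : u ∈ D := combo_mem_of_mem_closure hD hDo hb hξcl (sub_pos.2 ht1) ht0.le (by ring)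
  have hupper := H₁.le_log_one_sub hD hDo hDb hb hys_mem hξ hξD ht0 ht1
  have hlower := H₂.log_funkGauge_sub_le hD hDo hb hys_mem hη hu
  have hbu : Real.log (funkGauge D b u) ≤ -Real.log (1 - t) := by
    rw [← Real.log_inv]
    exact Real.log_le_log (funkGauge_pos hDo hu)
      (funkGauge_combo_le hξcl (sub_pos.2 ht1) ht0 (sub_add_cancel 1 t))
  have hξu : Real.log (funkGauge D ξ u) ≤ Real.log t⁻¹ := by
    refine Real.log_le_log (funkGauge_pos hDo hu) ?_
    have h := funkGauge_combo_le (x := ξ) (subset_closure hb) ht0 (sub_pos.2 ht1) (by ring)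
    rwa [add_comm] at h
  have hηb := Real.log_le_log (funkGauge_pos hDo hb) hle
  rw [← Real.log_le_log_iff (funkGauge_pos hDo hu) (inv_pos.2 ht0)]
  linarith

theorem eq_of_tendsto (H₁ : TendstoHorofunction D b ys l₁ h)
    (H₂ : TendstoHorofunction D b ys l₂ h) [l₁.NeBot] [l₂.NeBot] (hD : Convex ℝ D)
    (hDo : IsOpen D) (hDb : Bornology.IsBounded D) (hb : b ∈ D) (hys_mem : ∀ i, ys i ∈ D)
    (hξ : Tendsto ys l₁ (𝓝 ξ)) (hξD : ξ ∉ D) (hη : Tendsto ys l₂ (𝓝 η)) (hηD : η ∉ D) :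
    ξ = η := by
  wlog hle : funkGauge D η b ≤ funkGauge D ξ b generalizing ξ η l₁ l₂
  · exact (this H₂ H₁ hη hηD hξ hξD (le_of_not_ge hle)).symm
  exact eq_of_forall_funkGauge_le_inv hD hDo hDb hb
    (mem_closure_of_tendsto hξ (Eventually.of_forall hys_mem)) fun t ht =>
      H₁.funkGauge_le_inv H₂ hD hDo hDb hb hys_mem hξ hξD hη hle ht.1 ht.2

end TendstoHorofunction

end Horofunction

end HilbertGeometry

open HilbertGeometry

/-- if a sequence in a bounded open convex domain `D` converges to a point
of the horofunction boundary of the Hilbert geometry, then it converges in the usual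
sense to a point of the Euclidean boundary of `D`. -/
theorem hilbert_horofunction_convergence (N : ℕ) (D : Set (Fin N → ℝ))
    (hDo : IsOpen D) (hDconv : Convex ℝ D) (hDb : Bornology.IsBounded D)
    (b : Fin N → ℝ) (hb : b ∈ D)
    (xs : ℕ → (Fin N → ℝ)) (hxs : ∀ n, xs n ∈ D) (h : (Fin N → ℝ) → ℝ)
    (hconv : ∀ u ∈ D, Tendsto (fun n => hilOn D u (xs n) - hilOn D b (xs n)) atTop (𝓝 (h u)))
    (hhoro : ¬ ∃ p ∈ D, ∀ u ∈ D, h u = hilOn D u p - hilOn D b p) :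
    ∃ x ∈ frontier D, Tendsto xs atTop (𝓝 x) := by
  have H : TendstoHorofunction D b xs atTop h := hconv
  have hcpt : IsCompact (closure D) := hDb.isCompact_closure
  have hmem : ∀ n, xs n ∈ closure D := fun n => subset_closure (hxs n)
  have hout : ∀ p, MapClusterPt p atTop xs → p ∉ D := by
    intro p hp hpD
    obtain ⟨U, hU, hUp⟩ := mapClusterPt_iff_ultrafilter.1 hp
    exact hhoro ⟨p, hpD, (H.mono hU).eq_sub_of_tendsto_mem hDconv hDo hb hpD hUp⟩
  obtain ⟨ξ, hξ, hξc⟩ := hcpt.exists_mapClusterPt (f := atTop) (u := xs)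
    (tendsto_principal.2 (Eventually.of_forall hmem))
  have huniq : ∀ η ∈ closure D, MapClusterPt η atTop xs → η = ξ := by
    intro η _ hηc
    obtain ⟨U, hU, hUη⟩ := mapClusterPt_iff_ultrafilter.1 hηc
    obtain ⟨V, hV, hVξ⟩ := mapClusterPt_iff_ultrafilter.1 hξc
    exact (H.mono hU).eq_of_tendsto (H.mono hV) hDconv hDo hDb hb hxs hUη (hout η hηc) hVξ
      (hout ξ hξc)
  refine ⟨ξ, ?_, hcpt.tendsto_nhds_of_unique_mapClusterPt (Eventually.of_forall hmem) huniq⟩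
  rw [hDo.frontier_eq]
  exact ⟨hξ, hout ξ hξc⟩
end
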